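/- arXiv:1605.02880 — 8 statements merged into one kernel-verified Lean document; each statement's English description precedes it below -/
import Mathlib

section
/- For every λ ∈ ℝ, the perturbation measure satisfies M_TV(λ) = (1 − 2 S(0;λ))/2, where S(0;λ) = ∫_{−∞}^0 2 f(x) G(λ ω(x)) dx is the cumulative distribution function of the skew-symmetric density evaluated at 0. Equivalently: sign(λ) · (1/2) ∫_ℝ |2 G(λ ω(x)) − 1| f(x) dx = 1/2 − ∫_{−∞}^0 2 f(x) G(λ ω(x)) dx. -/
/-!
On the half-line `x ≤ 0` the sign of `l * ω x` is opposite to that of `l`, so monotonicity and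
symmetry of `G` about `1/2` give `sign l * |2 G(l ω x) - 1| = 1 - 2 G(l ω x)` there. The integrand
`|2 G(l ω x) - 1| f x` is even, hence its integral is twice the integral over `x ≤ 0`; as `f` is even
of total mass `1`, the latter is `∫_{x ≤ 0} f - ∫_{x ≤ 0} 2 f G(l ω) = 1/2 - S(0; l)`.
-/

open MeasureTheory Real Set

theorem integral_eq_two_mul_setIntegral_Iic_of_even {h : ℝ → ℝ} (heven : ∀ x, h (-x) = h x) :
    ∫ x, h x = 2 * ∫ x in Iic 0, h x := by
  have h_abs : ∀ x, h x = h (-|x|) := fun x => by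
    rcases abs_choice x with hx | hx <;> simp [hx, heven]
  calc ∫ x, h x = ∫ x, (fun y => h (-y)) |x| := by simp_rw [← h_abs]
    _ = 2 * ∫ x in Ioi 0, h (-x) := integral_comp_abs (f := fun y => h (-y))
    _ = 2 * ∫ x in Iic 0, h x := by rw [integral_comp_neg_Ioi, neg_zero]

section SymmetricCDF

variable {G : ℝ → ℝ}

theorem abs_two_mul_sub_one_of_symm (hG_symm : ∀ t, G (-t) = 1 - G t) (t : ℝ) :
    |2 * G (-t) - 1| = |2 * G t - 1| := by
  rw [hG_symm, show 2 * (1 - G t) - 1 = -(2 * G t - 1) by ring, abs_neg]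

theorem sign_mul_abs_two_mul_sub_one_of_nonpos (hG_mono : Monotone G)
    (hG_symm : ∀ t, G (-t) = 1 - G t) (l : ℝ) {u : ℝ} (hu : u ≤ 0) :
    sign l * |2 * G (l * u) - 1| = 1 - 2 * G (l * u) := by
  have hG_zero : G 0 = 1 / 2 := by linarith [neg_zero (G := ℝ) ▸ hG_symm 0]
  rcases lt_trichotomy l 0 with hl | rfl | hl
  · have : 1 / 2 ≤ G (l * u) := hG_zero ▸ hG_mono (mul_nonneg_of_nonpos_of_nonpos hl.le hu)
    rw [sign_of_neg hl, abs_of_nonneg (by linarith)]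
    ring
  · simp [hG_zero]
  · have : G (l * u) ≤ 1 / 2 := hG_zero ▸ hG_mono (mul_nonpos_of_nonneg_of_nonpos hl.le hu)
    rw [sign_of_pos hl, abs_of_nonpos (by linarith)]
    ring

end SymmetricCDF

theorem skew_symmetric_MTV_closed_form_general
    (f G ω : ℝ → ℝ)
    (hf_int : Integrable f) (hf_one : ∫ x, f x = 1)
    (hf_even : ∀ x, f (-x) = f x)
    (hG_mono : Monotone G)
    (hG_range : ∀ t, G t ∈ Set.Icc (0 : ℝ) 1)
    (hG_symm : ∀ t, G (-t) = 1 - G t)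
    (hω_meas : Measurable ω)
    (hω_odd : ∀ x, ω (-x) = -ω x)
    (hω_nonneg : ∀ x, 0 ≤ x → 0 ≤ ω x)
    (l : ℝ) :
    Real.sign l * ((1 / 2) * ∫ x, |2 * G (l * ω x) - 1| * f x)
      = 1 / 2 - ∫ x in Set.Iic (0 : ℝ), 2 * f x * G (l * ω x) := by
  have hGω_meas : Measurable fun x => G (l * ω x) :=
    hG_mono.measurable.comp (measurable_const.mul hω_meas)
  have hGω_bdd : ∀ x, ‖G (l * ω x)‖ ≤ 1 := fun x => by
    obtain ⟨h0, h1⟩ := hG_range (l * ω x)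
    rw [norm_eq_abs, abs_le]
    constructor <;> linarith
  have hfG_int : Integrable fun x => 2 * f x * G (l * ω x) :=
    (hf_int.const_mul 2).mul_bdd hGω_meas.aestronglyMeasurable (ae_of_all _ hGω_bdd)
  have hf_half : ∫ x in Iic 0, f x = 1 / 2 := by
    linarith [integral_eq_two_mul_setIntegral_Iic_of_even hf_even]
  have h_even : ∀ x, |2 * G (l * ω (-x)) - 1| * f (-x) = |2 * G (l * ω x) - 1| * f x :=
    fun x => by rw [hω_odd, hf_even, mul_neg, abs_two_mul_sub_one_of_symm hG_symm]
  have hω_nonpos : ∀ x ≤ 0, ω x ≤ 0 := fun x hx => by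
    linarith [hω_odd x ▸ hω_nonneg (-x) (neg_nonneg.mpr hx)]
  calc sign l * ((1 / 2) * ∫ x, |2 * G (l * ω x) - 1| * f x)
      = ∫ x in Iic 0, sign l * |2 * G (l * ω x) - 1| * f x := by
        rw [integral_eq_two_mul_setIntegral_Iic_of_even h_even,
          show ∀ a : ℝ, sign l * (1 / 2 * (2 * a)) = sign l * a by intro a; ring,
          ← integral_const_mul]
        simp_rw [mul_assoc]
    _ = ∫ x in Iic 0, f x - 2 * f x * G (l * ω x) :=
        setIntegral_congr_fun measurableSet_Iic fun x hx => by
          rw [sign_mul_abs_two_mul_sub_one_of_nonpos hG_mono hG_symm l (hω_nonpos x hx)]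
          ring
    _ = 1 / 2 - ∫ x in Iic 0, 2 * f x * G (l * ω x) := by
      rw [integral_sub hf_int.integrableOn hfG_int.integrableOn, hf_half]

/-- For every λ ∈ ℝ, the perturbation measure satisfies
M_TV(λ) = (1 − 2 S(0;λ))/2, where S(0;λ) is the cdf of the skew-symmetric
density evaluated at 0. -/
theorem skew_symmetric_MTV_closed_form
    (f G ω : ℝ → ℝ)
    (hf_meas : Measurable f) (hf_nonneg : ∀ x, 0 ≤ f x)
    (hf_int : Integrable f) (hf_one : ∫ x, f x = 1)
    (hf_even : ∀ x, f (-x) = f x)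
    (hG_meas : Measurable G) (hG_mono : Monotone G)
    (hG_range : ∀ t, G t ∈ Set.Icc (0 : ℝ) 1)
    (hG_symm : ∀ t, G (-t) = 1 - G t)
    (hG_zero : G 0 = 1 / 2)
    (hω_meas : Measurable ω)
    (hω_odd : ∀ x, ω (-x) = -ω x)
    (hω_nonneg : ∀ x, 0 ≤ x → 0 ≤ ω x)
    (l : ℝ) :
    Real.sign l * ((1 / 2) * ∫ x, |2 * G (l * ω x) - 1| * f x)
      = 1 / 2 - ∫ x in Set.Iic (0 : ℝ), 2 * f x * G (l * ω x) :=
  skew_symmetric_MTV_closed_form_general f G ω hf_int hf_one hf_even hG_mono hG_range hG_symm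
    hω_meas hω_odd hω_nonneg l
end

section
/- The map λ ↦ M_TV(λ) is monotone nondecreasing on ℝ: for all λ₁ ≤ λ₂, sign(λ₁) · (1/2) ∫_ℝ |2 G(λ₁ ω(x)) − 1| f(x) dx ≤ sign(λ₂) · (1/2) ∫_ℝ |2 G(λ₂ ω(x)) − 1| f(x) dx. -/
/-!
For a CDF `G` symmetric about `0`, `|2 G t - 1| = 2 G |t| - 1`, which is nondecreasing in `|t|`.
Hence `d_TV(λ)` is a nonnegative function of `λ` that grows with `|λ|`, and any such function
becomes monotone once multiplied by `sign λ`.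
-/

open MeasureTheory Real

theorem abs_two_mul_sub_one_eq_of_symm {G : ℝ → ℝ} (hG_mono : Monotone G)
    (hG_symm : ∀ t, G (-t) = 1 - G t) (hG_zero : G 0 = 1 / 2) (t : ℝ) :
    |2 * G t - 1| = 2 * G |t| - 1 := by
  rcases le_or_gt 0 t with ht | ht
  · have : G 0 ≤ G t := hG_mono ht
    rw [abs_of_nonneg ht, abs_of_nonneg (by linarith)]
  · have : G 0 ≤ G (-t) := hG_mono (by linarith)
    have hGt : G t = 1 - G (-t) := by
      rw [← hG_symm, neg_neg]
    rw [abs_of_neg ht, hGt, abs_of_nonpos (by linarith)]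
    ring

theorem abs_two_mul_sub_one_le_of_abs_le {G : ℝ → ℝ} (hG_mono : Monotone G)
    (hG_symm : ∀ t, G (-t) = 1 - G t) (hG_zero : G 0 = 1 / 2) {s t : ℝ} (h : |s| ≤ |t|) :
    |2 * G s - 1| ≤ |2 * G t - 1| := by
  rw [abs_two_mul_sub_one_eq_of_symm hG_mono hG_symm hG_zero,
    abs_two_mul_sub_one_eq_of_symm hG_mono hG_symm hG_zero]
  linarith [hG_mono h]

theorem abs_two_mul_sub_one_le_one {G : ℝ → ℝ} (hG_range : ∀ t, G t ∈ Set.Icc (0 : ℝ) 1)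
    (t : ℝ) : |2 * G t - 1| ≤ 1 := by
  obtain ⟨h0, h1⟩ := hG_range t
  rw [abs_le]
  constructor <;> linarith

theorem integrable_abs_two_mul_comp_sub_one_mul {α : Type*} [MeasurableSpace α]
    {μ : Measure α} {f ω : α → ℝ} {G : ℝ → ℝ} (hf_int : Integrable f μ)
    (hG_mono : Monotone G) (hG_range : ∀ t, G t ∈ Set.Icc (0 : ℝ) 1) (hω_meas : Measurable ω)
    (l : ℝ) : Integrable (fun x => |2 * G (l * ω x) - 1| * f x) μ := by
  refine hf_int.bdd_mul (c := 1) ?_ (ae_of_all _ fun x => ?_)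
  · exact (((hG_mono.measurable.comp (hω_meas.const_mul l)).const_mul 2).sub_const 1).abs
      |>.aestronglyMeasurable
  · rw [norm_eq_abs, abs_abs]
    exact abs_two_mul_sub_one_le_one hG_range _

theorem integral_abs_two_mul_comp_sub_one_mul_mono {α : Type*} [MeasurableSpace α]
    {μ : Measure α} {f ω : α → ℝ} {G : ℝ → ℝ} (hf_nonneg : ∀ x, 0 ≤ f x)
    (hf_int : Integrable f μ) (hG_mono : Monotone G) (hG_range : ∀ t, G t ∈ Set.Icc (0 : ℝ) 1)
    (hG_symm : ∀ t, G (-t) = 1 - G t) (hG_zero : G 0 = 1 / 2) (hω_meas : Measurable ω)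
    {a b : ℝ} (hab : |a| ≤ |b|) :
    ∫ x, |2 * G (a * ω x) - 1| * f x ∂μ ≤ ∫ x, |2 * G (b * ω x) - 1| * f x ∂μ := by
  refine integral_mono
    (integrable_abs_two_mul_comp_sub_one_mul hf_int hG_mono hG_range hω_meas a)
    (integrable_abs_two_mul_comp_sub_one_mul hf_int hG_mono hG_range hω_meas b) fun x => ?_
  refine mul_le_mul_of_nonneg_right
    (abs_two_mul_sub_one_le_of_abs_le hG_mono hG_symm hG_zero ?_) (hf_nonneg x)
  rw [abs_mul, abs_mul]
  exact mul_le_mul_of_nonneg_right hab (abs_nonneg _)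

theorem monotone_sign_mul_of_nonneg_of_abs_le {g : ℝ → ℝ} (hg_nonneg : ∀ l, 0 ≤ g l)
    (hg_abs : ∀ a b, |a| ≤ |b| → g a ≤ g b) : Monotone fun l => Real.sign l * g l := by
  intro a b hab
  dsimp only
  have h_nonneg : ∀ l, 0 ≤ l → 0 ≤ Real.sign l * g l := fun l hl => by
    rcases hl.eq_or_lt with rfl | hl
    · simp [Real.sign_zero]
    · rw [Real.sign_of_pos hl, one_mul]
      exact hg_nonneg l
  rcases lt_or_ge a 0 with ha | ha
  · rw [Real.sign_of_neg ha]
    rcases lt_or_ge b 0 with hb | hb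
    · rw [Real.sign_of_neg hb]
      linarith [hg_abs b a (by rw [abs_of_neg ha, abs_of_neg hb]; linarith)]
    · linarith [hg_nonneg a, h_nonneg b hb]
  · rcases ha.eq_or_lt with rfl | ha
    · simpa [Real.sign_zero] using h_nonneg b hab
    · have hb := ha.trans_le hab
      rw [Real.sign_of_pos ha, Real.sign_of_pos hb, one_mul, one_mul]
      exact hg_abs a b (by rwa [abs_of_pos ha, abs_of_pos hb])

theorem skew_symmetric_MTV_monotone_general
    (f G ω : ℝ → ℝ)
    (hf_nonneg : ∀ x, 0 ≤ f x)
    (hf_int : Integrable f)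
    (hG_mono : Monotone G)
    (hG_range : ∀ t, G t ∈ Set.Icc (0 : ℝ) 1)
    (hG_symm : ∀ t, G (-t) = 1 - G t)
    (hG_zero : G 0 = 1 / 2)
    (hω_meas : Measurable ω) :
    ∀ l₁ l₂ : ℝ, l₁ ≤ l₂ →
      Real.sign l₁ * ((1 / 2) * ∫ x, |2 * G (l₁ * ω x) - 1| * f x)
        ≤ Real.sign l₂ * ((1 / 2) * ∫ x, |2 * G (l₂ * ω x) - 1| * f x) := by
  refine fun _ _ h => monotone_sign_mul_of_nonneg_of_abs_le
    (g := fun l => (1 / 2) * ∫ x, |2 * G (l * ω x) - 1| * f x) (fun _ => ?_) (fun _ _ hab => ?_) h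
  · exact mul_nonneg (by norm_num) <|
      integral_nonneg fun x => mul_nonneg (abs_nonneg _) (hf_nonneg x)
  · exact mul_le_mul_of_nonneg_left (integral_abs_two_mul_comp_sub_one_mul_mono hf_nonneg
      hf_int hG_mono hG_range hG_symm hG_zero hω_meas hab) (by norm_num)

/-- The perturbation measure λ ↦ M_TV(λ) is monotone
nondecreasing on ℝ. -/
theorem skew_symmetric_MTV_monotone
    (f G ω : ℝ → ℝ)
    (hf_meas : Measurable f) (hf_nonneg : ∀ x, 0 ≤ f x)
    (hf_int : Integrable f) (hf_one : ∫ x, f x = 1)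
    (hf_even : ∀ x, f (-x) = f x)
    (hG_meas : Measurable G) (hG_mono : Monotone G)
    (hG_range : ∀ t, G t ∈ Set.Icc (0 : ℝ) 1)
    (hG_symm : ∀ t, G (-t) = 1 - G t)
    (hG_zero : G 0 = 1 / 2)
    (hω_meas : Measurable ω)
    (hω_odd : ∀ x, ω (-x) = -ω x)
    (hω_nonneg : ∀ x, 0 ≤ x → 0 ≤ ω x) :
    ∀ l₁ l₂ : ℝ, l₁ ≤ l₂ →
      Real.sign l₁ * ((1 / 2) * ∫ x, |2 * G (l₁ * ω x) - 1| * f x)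
        ≤ Real.sign l₂ * ((1 / 2) * ∫ x, |2 * G (l₂ * ω x) - 1| * f x) :=
  skew_symmetric_MTV_monotone_general f G ω hf_nonneg hf_int hG_mono hG_range hG_symm hG_zero
    hω_meas
end

section
/- For the skew-normal family, the perturbation measure has the closed form M_TV(λ) = arctan(λ)/π for every λ ∈ ℝ; that is, sign(λ) · (1/2) ∫_ℝ |2 Φ(λ x) − 1| φ(x) dx = arctan(λ)/π, where φ(x) = e^{−x²/2}/√(2π) and Φ(t) = ∫_{−∞}^t φ(u) du. -/
/-!
Since `|2Φ(λx) - 1| φ(x)` is even in `x` and depends on `λ` only through `|λ|`, the integral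
equals `2 H(|λ|)` with `H(λ) = ∫₀^∞ (2Φ(λx) - 1) φ(x) dx`. Differentiating under the integral
sign, `H'(λ) = ∫₀^∞ 2x φ(λx) φ(x) dx = 1 / (π (1 + λ²))`, a first Gaussian moment, and
`H(0) = 0`; hence `H = arctan / π`, and the sign factor restores `λ` because `arctan` is odd.
-/

open MeasureTheory Real

/-- The standard normal density. -/
noncomputable def stdNormalPdf (x : ℝ) : ℝ := Real.exp (-x ^ 2 / 2) / Real.sqrt (2 * Real.pi)

/-- The standard normal cumulative distribution function. -/
noncomputable def stdNormalCdf (t : ℝ) : ℝ := ∫ u in Set.Iic t, stdNormalPdf u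

open Set Filter ProbabilityTheory

theorem integral_Ioi_mul_exp_neg_mul_sq {b : ℝ} (hb : 0 < b) :
    ∫ x in Ioi (0 : ℝ), x * exp (-b * x ^ 2) = (2 * b)⁻¹ := by
  apply Complex.ofReal_injective
  rw [← integral_complex_ofReal]
  push_cast
  exact integral_mul_cexp_neg_mul_sq (by simpa using hb)

lemma stdNormalPdf_eq_gaussianPDFReal : stdNormalPdf = gaussianPDFReal 0 1 := by
  ext x
  simp [stdNormalPdf, gaussianPDFReal, div_eq_inv_mul]

lemma stdNormalPdf_mul_stdNormalPdf (a x : ℝ) :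
    stdNormalPdf (a * x) * stdNormalPdf x = (2 * π)⁻¹ * exp (-((1 + a ^ 2) / 2) * x ^ 2) := by
  rw [stdNormalPdf, stdNormalPdf, div_mul_div_comm, ← exp_add,
    mul_self_sqrt (by positivity), div_eq_inv_mul]
  ring_nf

lemma stdNormalPdf_nonneg (x : ℝ) : 0 ≤ stdNormalPdf x := by
  rw [stdNormalPdf]; positivity

lemma stdNormalPdf_le (x : ℝ) : stdNormalPdf x ≤ (√(2 * π))⁻¹ := by
  rw [stdNormalPdf, div_eq_inv_mul]
  exact mul_le_of_le_one_right (by positivity) (exp_le_one_iff.2 (by nlinarith [sq_nonneg x]))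

lemma stdNormalPdf_neg (x : ℝ) : stdNormalPdf (-x) = stdNormalPdf x := by
  simp [stdNormalPdf]

lemma stdNormalPdf_abs (x : ℝ) : stdNormalPdf |x| = stdNormalPdf x := by
  simp [stdNormalPdf]

@[fun_prop]
lemma continuous_stdNormalPdf : Continuous stdNormalPdf := by
  unfold stdNormalPdf; fun_prop

lemma integrable_stdNormalPdf : Integrable stdNormalPdf :=
  stdNormalPdf_eq_gaussianPDFReal ▸ integrable_gaussianPDFReal 0 1

lemma integral_stdNormalPdf : ∫ x, stdNormalPdf x = 1 :=
  stdNormalPdf_eq_gaussianPDFReal ▸ integral_gaussianPDFReal_eq_one 0 one_ne_zero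

lemma integrable_mul_stdNormalPdf : Integrable fun x => x * stdNormalPdf x := by
  refine ((integrable_mul_exp_neg_mul_sq (b := 1 / 2) (by norm_num)).div_const
    √(2 * π)).congr (ae_of_all _ fun x => ?_)
  simp only [stdNormalPdf, mul_div_assoc]
  ring_nf

lemma hasDerivAt_stdNormalCdf (t : ℝ) : HasDerivAt stdNormalCdf (stdNormalPdf t) t := by
  have h : HasDerivAt (fun u => stdNormalCdf 0 + ∫ x in (0 : ℝ)..u, stdNormalPdf x)
      (stdNormalPdf t) t :=
    (intervalIntegral.integral_hasDerivAt_right integrable_stdNormalPdf.intervalIntegrable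
      (continuous_stdNormalPdf.stronglyMeasurableAtFilter _ _)
      continuous_stdNormalPdf.continuousAt).const_add (stdNormalCdf 0)
  refine h.congr_of_eventuallyEq (Eventually.of_forall fun u => ?_)
  have := intervalIntegral.integral_Iic_sub_Iic integrable_stdNormalPdf.integrableOn
    integrable_stdNormalPdf.integrableOn (a := 0) (b := u) (μ := volume)
  simp only [stdNormalCdf, ← this, add_sub_cancel]

@[fun_prop]
lemma continuous_stdNormalCdf : Continuous stdNormalCdf :=
  continuous_iff_continuousAt.2 fun t => (hasDerivAt_stdNormalCdf t).continuousAt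

lemma stdNormalCdf_nonneg (t : ℝ) : 0 ≤ stdNormalCdf t :=
  setIntegral_nonneg measurableSet_Iic fun x _ => stdNormalPdf_nonneg x

lemma stdNormalCdf_le_one (t : ℝ) : stdNormalCdf t ≤ 1 :=
  integral_stdNormalPdf ▸
    setIntegral_le_integral integrable_stdNormalPdf (ae_of_all _ stdNormalPdf_nonneg)

lemma monotone_stdNormalCdf : Monotone stdNormalCdf := fun _ _ hab =>
  setIntegral_mono_set integrable_stdNormalPdf.integrableOn (ae_of_all _ stdNormalPdf_nonneg)
    (Iic_subset_Iic.2 hab).eventuallyLE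

lemma stdNormalCdf_neg (t : ℝ) : stdNormalCdf (-t) = 1 - stdNormalCdf t := by
  have h := intervalIntegral.integral_Iic_add_Ioi (b := t) (μ := volume)
    integrable_stdNormalPdf.integrableOn integrable_stdNormalPdf.integrableOn
  rw [integral_stdNormalPdf] at h
  rw [eq_sub_iff_add_eq', stdNormalCdf, ← h, stdNormalCdf, ← integral_comp_neg_Ioi]
  simp only [stdNormalPdf_neg]

lemma stdNormalCdf_zero : stdNormalCdf 0 = 1 / 2 := by
  linarith [neg_zero (G := ℝ) ▸ stdNormalCdf_neg 0]

lemma abs_two_mul_stdNormalCdf_sub_one_le (t : ℝ) : |2 * stdNormalCdf t - 1| ≤ 1 :=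
  abs_le.2 ⟨by linarith [stdNormalCdf_nonneg t], by linarith [stdNormalCdf_le_one t]⟩

lemma abs_two_mul_stdNormalCdf_abs_sub_one (t : ℝ) :
    |2 * stdNormalCdf |t| - 1| = |2 * stdNormalCdf t - 1| := by
  rcases abs_choice t with h | h
  · rw [h]
  · rw [h, stdNormalCdf_neg, ← abs_neg]
    ring_nf

noncomputable def skewIntegral (l : ℝ) : ℝ :=
  ∫ x in Ioi (0 : ℝ), (2 * stdNormalCdf (l * x) - 1) * stdNormalPdf x

lemma integral_Ioi_two_mul_mul_stdNormalPdf_mul_stdNormalPdf (l : ℝ) :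
    ∫ x in Ioi (0 : ℝ), 2 * x * stdNormalPdf (l * x) * stdNormalPdf x = 1 / (1 + l ^ 2) / π := by
  have hb : 0 < (1 + l ^ 2) / 2 := by positivity
  calc _ = ∫ x in Ioi (0 : ℝ), π⁻¹ * (x * exp (-((1 + l ^ 2) / 2) * x ^ 2)) := by
          refine integral_congr_ae (ae_of_all _ fun x => ?_)
          simp only [mul_assoc, stdNormalPdf_mul_stdNormalPdf, mul_inv]
          ring
    _ = _ := by
          rw [integral_const_mul, integral_Ioi_mul_exp_neg_mul_sq hb]
          field_simp

lemma hasDerivAt_skewIntegral (l : ℝ) : HasDerivAt skewIntegral (1 / (1 + l ^ 2) / π) l := by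
  have h_meas (a : ℝ) : AEStronglyMeasurable
      (fun x => (2 * stdNormalCdf (a * x) - 1) * stdNormalPdf x) (volume.restrict (Ioi 0)) :=
    Continuous.aestronglyMeasurable (by fun_prop)
  have h_int : Integrable (fun x => (2 * stdNormalCdf (l * x) - 1) * stdNormalPdf x)
      (volume.restrict (Ioi 0)) := by
    refine integrable_stdNormalPdf.restrict.mono (h_meas l) (ae_of_all _ fun x => ?_)
    rw [norm_mul, norm_of_nonneg (stdNormalPdf_nonneg x)]
    exact mul_le_of_le_one_left (stdNormalPdf_nonneg x) (abs_two_mul_stdNormalCdf_sub_one_le _)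
  have h_bound (x a : ℝ) : ‖2 * x * stdNormalPdf (a * x) * stdNormalPdf x‖
      ≤ 2 * (√(2 * π))⁻¹ * |x * stdNormalPdf x| := by
    rw [norm_eq_abs, show 2 * x * stdNormalPdf (a * x) * stdNormalPdf x
      = 2 * stdNormalPdf (a * x) * (x * stdNormalPdf x) by ring, abs_mul,
      abs_of_nonneg (by linarith [stdNormalPdf_nonneg (a * x)])]
    gcongr
    exact stdNormalPdf_le _
  have h_diff (x a : ℝ) : HasDerivAt (fun a => (2 * stdNormalCdf (a * x) - 1) * stdNormalPdf x)
      (2 * x * stdNormalPdf (a * x) * stdNormalPdf x) a := by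
    rw [show 2 * x * stdNormalPdf (a * x) * stdNormalPdf x
      = 2 * (stdNormalPdf (a * x) * x) * stdNormalPdf x by ring]
    exact ((((hasDerivAt_stdNormalCdf (a * x)).comp a (hasDerivAt_mul_const x)).const_mul
      2).sub_const 1).mul_const (stdNormalPdf x)
  have := (hasDerivAt_integral_of_dominated_loc_of_deriv_le univ_mem
    (Eventually.of_forall h_meas) h_int (Continuous.aestronglyMeasurable (by fun_prop))
    (ae_of_all _ fun x a _ => h_bound x a)
    ((integrable_mul_stdNormalPdf.abs.const_mul _).restrict)
    (ae_of_all _ fun x a _ => h_diff x a)).2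
  rwa [integral_Ioi_two_mul_mul_stdNormalPdf_mul_stdNormalPdf] at this

lemma skewIntegral_eq_arctan_div_pi (l : ℝ) : skewIntegral l = arctan l / π := by
  have h_zero : skewIntegral 0 = 0 := by simp [skewIntegral, stdNormalCdf_zero]
  have h_deriv (a : ℝ) : HasDerivAt (fun a => skewIntegral a - arctan a / π) 0 a := by
    simpa using (hasDerivAt_skewIntegral a).fun_sub ((hasDerivAt_arctan a).div_const π)
  have := is_const_of_deriv_eq_zero (fun a => (h_deriv a).differentiableAt)
    (fun a => (h_deriv a).deriv) l 0
  simpa [h_zero, sub_eq_zero] using this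

lemma integral_abs_two_mul_stdNormalCdf_mul_sub_one_mul_stdNormalPdf (l : ℝ) :
    ∫ x, |2 * stdNormalCdf (l * x) - 1| * stdNormalPdf x = 2 * (arctan |l| / π) := by
  have h_even (x : ℝ) : |2 * stdNormalCdf (l * x) - 1| * stdNormalPdf x
      = |2 * stdNormalCdf (|l| * |x|) - 1| * stdNormalPdf |x| := by
    rw [← abs_mul, abs_two_mul_stdNormalCdf_abs_sub_one, stdNormalPdf_abs]
  have h_pos : ∀ x ∈ Ioi (0 : ℝ), |2 * stdNormalCdf (|l| * x) - 1| * stdNormalPdf x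
      = (2 * stdNormalCdf (|l| * x) - 1) * stdNormalPdf x := by
    intro x hx
    have := monotone_stdNormalCdf (mul_nonneg (abs_nonneg l) (le_of_lt hx))
    rw [stdNormalCdf_zero] at this
    rw [abs_of_nonneg (by linarith)]
  rw [integral_congr_ae (ae_of_all _ h_even),
    integral_comp_abs (f := fun x => |2 * stdNormalCdf (|l| * x) - 1| * stdNormalPdf x),
    setIntegral_congr_fun measurableSet_Ioi h_pos, ← skewIntegral, skewIntegral_eq_arctan_div_pi]

/-- For the skew-normal family the perturbation measure has the
closed form M_TV(λ) = arctan(λ)/π. -/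
theorem skew_normal_MTV_closed_form (l : ℝ) :
    Real.sign l * ((1 / 2) * ∫ x, |2 * stdNormalCdf (l * x) - 1| * stdNormalPdf x)
      = Real.arctan l / Real.pi := by
  rw [integral_abs_two_mul_stdNormalCdf_mul_sub_one_mul_stdNormalPdf]
  rcases lt_trichotomy l 0 with hl | rfl | hl
  · rw [sign_of_neg hl, abs_of_neg hl, arctan_neg]
    ring
  · simp
  · rw [sign_of_pos hl, abs_of_pos hl]
    ring
end

section
/- (Theorem 1(iii), upper tail bound.) Suppose ω(x) = x, f is bounded above by M = f(0) < ∞, and ∫_0^∞ u g(u) du < ∞. Then for every λ ≠ 0, the BTV(1,1) prior satisfies π(λ) = 2 ∫_0^∞ x f(x) g(λ x) dx ≤ (2M/λ²) ∫_0^∞ u g(u) du. -/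
/-! Since `g` is even, `g (l x) = g (|l| x)`. Bounding `f` by `M` leaves `M ∫₀^∞ x g(|l| x) dx`,
and the substitution `u = |l| x` turns this into `M / l² ∫₀^∞ u g(u) du`. The integrand is
nonnegative, so the comparison needs integrability only of the dominating side. -/

open MeasureTheory Real Set

lemma Function.Even.apply_abs_mul {g : ℝ → ℝ} (hg : Function.Even g) (l x : ℝ) :
    g (|l| * x) = g (l * x) := by
  rcases abs_choice l with h | h
  · rw [h]
  · rw [h, neg_mul, hg]

section ScaledFirstMoment

variable {g : ℝ → ℝ} {c : ℝ}

lemma integrableOn_Ioi_mul_comp_mul_left (hg : IntegrableOn (fun u => u * g u) (Ioi 0))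
    (hc : 0 < c) : IntegrableOn (fun x => x * g (c * x)) (Ioi 0) := by
  have hscaled : IntegrableOn (fun x => c * x * g (c * x)) (Ioi 0) := by
    simpa using (integrableOn_Ioi_comp_mul_left_iff (fun u => u * g u) 0 hc).mpr (by simpa using hg)
  refine IntegrableOn.congr_fun (hscaled.const_mul c⁻¹) (fun x _ => ?_) measurableSet_Ioi
  field_simp

lemma setIntegral_Ioi_mul_comp_mul_left (hc : 0 < c) :
    ∫ x in Ioi 0, x * g (c * x) = (c ^ 2)⁻¹ * ∫ u in Ioi 0, u * g u := by
  have hsubst := integral_comp_mul_left_Ioi (fun u => u * g u) 0 hc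
  simp only [mul_zero, smul_eq_mul] at hsubst
  calc ∫ x in Ioi 0, x * g (c * x) = c⁻¹ * ∫ x in Ioi 0, c * x * g (c * x) := by
        rw [← integral_const_mul]
        refine setIntegral_congr_fun measurableSet_Ioi (fun x _ => ?_)
        field_simp
    _ = (c ^ 2)⁻¹ * ∫ u in Ioi 0, u * g u := by
        rw [hsubst, ← mul_assoc, ← mul_inv, sq]

lemma setIntegral_Ioi_mul_mul_comp_mul_left_le {f : ℝ → ℝ} {M : ℝ} (hc : 0 < c)
    (hf_nonneg : ∀ x, 0 ≤ f x) (hf_bdd : ∀ x, f x ≤ M) (hg_nonneg : ∀ t, 0 ≤ g t)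
    (hg : IntegrableOn (fun u => u * g u) (Ioi 0)) :
    ∫ x in Ioi 0, x * f x * g (c * x) ≤ M / c ^ 2 * ∫ u in Ioi 0, u * g u := by
  calc ∫ x in Ioi 0, x * f x * g (c * x) ≤ ∫ x in Ioi 0, M * (x * g (c * x)) := by
        refine integral_mono_of_nonneg ?_ ((integrableOn_Ioi_mul_comp_mul_left hg hc).const_mul M) ?_
        · filter_upwards [ae_restrict_mem measurableSet_Ioi] with x hx
          exact mul_nonneg (mul_nonneg (le_of_lt hx) (hf_nonneg x)) (hg_nonneg _)
        · filter_upwards [ae_restrict_mem measurableSet_Ioi] with x hx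
          calc x * f x * g (c * x) ≤ x * M * g (c * x) := by
                gcongr
                · exact hg_nonneg _
                · exact le_of_lt hx
                · exact hf_bdd x
            _ = M * (x * g (c * x)) := by ring
    _ = M / c ^ 2 * ∫ u in Ioi 0, u * g u := by
        rw [integral_const_mul, setIntegral_Ioi_mul_comp_mul_left hc, div_eq_mul_inv, mul_assoc]

end ScaledFirstMoment

theorem BTV_one_one_upper_tail_bound_general
    (f g : ℝ → ℝ) (M : ℝ)
    (hf_nonneg : ∀ x, 0 ≤ f x)
    (hf_bdd : ∀ x, f x ≤ M)
    (hg_nonneg : ∀ t, 0 ≤ g t)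
    (hg_even : ∀ t, g (-t) = g t)
    (hug_int : IntegrableOn (fun u => u * g u) (Set.Ioi 0))
    (l : ℝ) (hl : l ≠ 0) :
    2 * ∫ x in Set.Ioi (0 : ℝ), x * f x * g (l * x)
      ≤ (2 * M / l ^ 2) * ∫ u in Set.Ioi (0 : ℝ), u * g u := by
  have hbound := setIntegral_Ioi_mul_mul_comp_mul_left_le (abs_pos.mpr hl) hf_nonneg hf_bdd
    hg_nonneg hug_int
  simp only [Function.Even.apply_abs_mul hg_even, sq_abs] at hbound
  rw [mul_div_assoc, mul_assoc]
  gcongr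

/-- Theorem 1(iii), upper tail bound: with ω(x) = x,
f bounded by M = f(0) and ∫_0^∞ u g(u) du < ∞, the BTV(1,1) prior satisfies
π(λ) ≤ (2M/λ²) ∫_0^∞ u g(u) du for all λ ≠ 0. -/
theorem BTV_one_one_upper_tail_bound
    (f g : ℝ → ℝ) (M : ℝ)
    (hf_meas : Measurable f) (hf_nonneg : ∀ x, 0 ≤ f x)
    (hf_int : Integrable f) (hf_one : ∫ x, f x = 1)
    (hf_even : ∀ x, f (-x) = f x)
    (hM : f 0 = M) (hf_bdd : ∀ x, f x ≤ M)
    (hg_meas : Measurable g) (hg_nonneg : ∀ t, 0 ≤ g t)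
    (hg_int : Integrable g) (hg_one : ∫ t, g t = 1)
    (hg_even : ∀ t, g (-t) = g t)
    (hg_bdd : ∃ C : ℝ, ∀ t, g t ≤ C)
    (hug_int : IntegrableOn (fun u => u * g u) (Set.Ioi 0))
    (l : ℝ) (hl : l ≠ 0) :
    2 * ∫ x in Set.Ioi (0 : ℝ), x * f x * g (l * x)
      ≤ (2 * M / l ^ 2) * ∫ u in Set.Ioi (0 : ℝ), u * g u :=
  BTV_one_one_upper_tail_bound_general f g M hf_nonneg hf_bdd hg_nonneg hg_even hug_int l hl
end

section
/- (Theorem 1(iii), lower tail bound.) Suppose ω(x) = x and f is unimodal, i.e. nonincreasing on [0,∞). Then for every L > 0 and every λ with |λ| ≥ L, the BTV(1,1) prior satisfies π(λ) = 2 ∫_0^∞ x f(x) g(λ x) dx ≥ (2/λ²) ∫_0^∞ u f(u/L) g(u) du. Combined with the upper bound, the tails of π are of order O(|λ|^{−2}). -/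
open MeasureTheory Real Set

/-!
Substituting `u = |λ| x` and using the evenness of `g` turns `π(λ)` into
`(2 / λ²) ∫_0^∞ u f(u / |λ|) g(u) du`. Since `f` is nonincreasing on `[0, ∞)` and
`u / |λ| ≤ u / L`, the integrand dominates `u f(u / L) g(u)`; integrability of both sides
comes from `f ≤ f 0` on `[0, ∞)` and `u g(u) ∈ L¹(0, ∞)`.
-/

namespace AntitoneOn

variable {f h : ℝ → ℝ}

theorem comp_div (hf : AntitoneOn f (Ici 0)) {a : ℝ} (ha : 0 < a) :
    AntitoneOn (fun x => f (x / a)) (Ici 0) := fun _ hx _ hy hxy =>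
  hf (div_nonneg hx ha.le) (div_nonneg hy ha.le) (div_le_div_of_nonneg_right hxy ha.le)

theorem integrableOn_Ioi_mul (hf : AntitoneOn f (Ici 0)) (hf_nonneg : ∀ x ∈ Ioi 0, 0 ≤ f x)
    (hh : IntegrableOn h (Ioi 0)) : IntegrableOn (fun x => f x * h x) (Ioi 0) := by
  refine hh.bdd_mul (c := f 0) ?_ ?_
  · exact (aemeasurable_restrict_of_antitoneOn measurableSet_Ioi
      (hf.mono Ioi_subset_Ici_self)).aestronglyMeasurable
  · filter_upwards [ae_restrict_mem measurableSet_Ioi] with x hx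
    rw [norm_of_nonneg (hf_nonneg x hx)]
    exact hf self_mem_Ici (mem_Ici.mpr (le_of_lt hx)) (le_of_lt hx)

theorem setIntegral_Ioi_comp_div_mul_mono (hf : AntitoneOn f (Ici 0))
    (hf_nonneg : ∀ x ∈ Ioi 0, 0 ≤ f x) (hh : IntegrableOn h (Ioi 0))
    (hh_nonneg : ∀ x ∈ Ioi 0, 0 ≤ h x)
    {a b : ℝ} (ha : 0 < a) (hab : a ≤ b) :
    ∫ u in Ioi 0, f (u / a) * h u ≤ ∫ u in Ioi 0, f (u / b) * h u := by
  have hb : 0 < b := ha.trans_le hab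
  have hf_nonneg_div : ∀ {c : ℝ}, 0 < c → ∀ x ∈ Ioi 0, 0 ≤ f (x / c) := fun hc x hx =>
    hf_nonneg _ (div_pos hx hc)
  refine setIntegral_mono_on
    ((hf.comp_div ha).integrableOn_Ioi_mul (hf_nonneg_div ha) hh)
    ((hf.comp_div hb).integrableOn_Ioi_mul (hf_nonneg_div hb) hh) measurableSet_Ioi ?_
  intro u hu
  have hu0 : 0 ≤ u := le_of_lt hu
  refine mul_le_mul_of_nonneg_right ?_ (hh_nonneg u hu)
  exact hf (div_nonneg hu0 hb.le) (div_nonneg hu0 ha.le) (div_le_div_of_nonneg_left hu0 ha hab)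

end AntitoneOn

theorem setIntegral_Ioi_mul_mul_comp_mul (F G : ℝ → ℝ) {c : ℝ} (hc : 0 < c) :
    ∫ x in Ioi 0, x * F x * G (c * x) = (c ^ 2)⁻¹ * ∫ u in Ioi 0, u * F (u / c) * G u := by
  have h := integral_comp_mul_left_Ioi (fun u => u * F (u / c) * G u) 0 hc
  simp only [mul_zero, smul_eq_mul, mul_div_cancel_left₀ _ hc.ne'] at h
  rw [← mul_inv_cancel_left₀ hc.ne' (∫ u in Ioi 0, u * F (u / c) * G u), ← h,
    ← integral_const_mul, ← integral_const_mul]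
  congr 1 with x
  field_simp

theorem BTV_one_one_lower_tail_bound_general
    (f g : ℝ → ℝ)
    (hf_nonneg : ∀ x, 0 ≤ f x)
    (hf_anti : AntitoneOn f (Set.Ici 0))
    (hg_nonneg : ∀ t, 0 ≤ g t)
    (hg_even : ∀ t, g (-t) = g t)
    (hug_int : IntegrableOn (fun u => u * g u) (Set.Ioi 0))
    (L : ℝ) (hL : 0 < L) (l : ℝ) (hl : L ≤ |l|) :
    (2 / l ^ 2) * ∫ u in Set.Ioi (0 : ℝ), u * f (u / L) * g u
      ≤ 2 * ∫ x in Set.Ioi (0 : ℝ), x * f x * g (l * x) := by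
  have hg_abs : ∀ x, g (l * x) = g (|l| * x) := fun x => by
    rcases abs_choice l with h | h <;> rw [h]
    rw [neg_mul, hg_even]
  have hug_nonneg : ∀ u ∈ Ioi (0 : ℝ), 0 ≤ u * g u := fun u hu =>
    mul_nonneg (le_of_lt hu) (hg_nonneg u)
  have hmono := hf_anti.setIntegral_Ioi_comp_div_mul_mono (fun x _ => hf_nonneg x) hug_int
    hug_nonneg hL hl
  simp_rw [hg_abs, setIntegral_Ioi_mul_mul_comp_mul f g (hL.trans_le hl), ← sq_abs l]
  calc 2 / |l| ^ 2 * ∫ u in Ioi 0, u * f (u / L) * g u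
      ≤ 2 / |l| ^ 2 * ∫ u in Ioi 0, u * f (u / |l|) * g u := by
        refine mul_le_mul_of_nonneg_left ?_ (by positivity)
        simpa only [mul_comm _ (f _), mul_assoc] using hmono
    _ = 2 * ((|l| ^ 2)⁻¹ * ∫ u in Ioi 0, u * f (u / |l|) * g u) := by ring

/-- Theorem 1(iii), lower tail bound: with ω(x) = x and f
unimodal (nonincreasing on [0,∞)), for every L > 0 and |λ| ≥ L the BTV(1,1)
prior satisfies π(λ) ≥ (2/λ²) ∫_0^∞ u f(u/L) g(u) du. -/
theorem BTV_one_one_lower_tail_bound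
    (f g : ℝ → ℝ)
    (hf_meas : Measurable f) (hf_nonneg : ∀ x, 0 ≤ f x)
    (hf_int : Integrable f) (hf_one : ∫ x, f x = 1)
    (hf_even : ∀ x, f (-x) = f x)
    (hf_anti : AntitoneOn f (Set.Ici 0))
    (hg_meas : Measurable g) (hg_nonneg : ∀ t, 0 ≤ g t)
    (hg_int : Integrable g) (hg_one : ∫ t, g t = 1)
    (hg_even : ∀ t, g (-t) = g t)
    (hg_bdd : ∃ C : ℝ, ∀ t, g t ≤ C)
    (hug_int : IntegrableOn (fun u => u * g u) (Set.Ioi 0))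
    (L : ℝ) (hL : 0 < L) (l : ℝ) (hl : L ≤ |l|) :
    (2 / l ^ 2) * ∫ u in Set.Ioi (0 : ℝ), u * f (u / L) * g u
      ≤ 2 * ∫ x in Set.Ioi (0 : ℝ), x * f x * g (l * x) :=
  BTV_one_one_lower_tail_bound_general f g hf_nonneg hf_anti hg_nonneg hg_even hug_int L hL l hl
end

section
/- The BTV(1,1) prior is a proper probability density: if ω(x) > 0 for all x > 0, then ∫_ℝ π(λ) dλ = 1, where π(λ) = 2 ∫_0^∞ ω(x) f(x) g(λ ω(x)) dx. -/
open MeasureTheory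

/-! For fixed `x > 0` the substitution `t = λ ω(x)` gives `∫ ω(x) g(λ ω(x)) dλ = ∫ g = 1`, so
after exchanging the order of integration (Fubini, justified by the same computation applied to
`|f|` and `|g|`) `∫ π = 2 ∫_0^∞ f = 1`, the last step by the symmetry of `f`. -/

theorem integral_Ioi_zero_eq_half_of_even {f : ℝ → ℝ} (hf : Integrable f)
    (hf_even : ∀ x, f (-x) = f x) :
    ∫ x in Set.Ioi (0 : ℝ), f x = (∫ x, f x) / 2 := by
  have h_Iic : ∫ x in Set.Iic (0 : ℝ), f x = ∫ x in Set.Ioi (0 : ℝ), f x := by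
    simpa only [hf_even, neg_zero] using integral_comp_neg_Iic (0 : ℝ) f
  have h_split :=
    intervalIntegral.integral_Iic_add_Ioi (b := (0 : ℝ)) hf.integrableOn hf.integrableOn
  linarith

theorem integral_mul_comp_mul_right {c : ℝ} (hc : 0 < c) (g : ℝ → ℝ) :
    ∫ l, c * g (l * c) = ∫ t, g t := by
  rw [integral_const_mul, Measure.integral_comp_mul_right, smul_eq_mul, abs_of_pos (inv_pos.2 hc),
    mul_inv_cancel_left₀ hc.ne']

section ScaleMixture

variable {f g ω : ℝ → ℝ} {s : Set ℝ}

theorem integral_scaleMixture_slice {x : ℝ} (hω : 0 < ω x) :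
    ∫ l, ω x * f x * g (l * ω x) = f x * ∫ t, g t := by
  simp_rw [mul_comm (ω x) (f x), mul_assoc]
  rw [integral_const_mul, integral_mul_comp_mul_right hω]

theorem integrable_scaleMixture (hs : MeasurableSet s) (hf : IntegrableOn f s)
    (hg_meas : Measurable g) (hg : Integrable g) (hω_meas : Measurable ω) (hω : ∀ x ∈ s, 0 < ω x) :
    Integrable (Function.uncurry fun l x ↦ ω x * f x * g (l * ω x))
      ((volume : Measure ℝ).prod (volume.restrict s)) := by
  have h_meas : AEStronglyMeasurable (Function.uncurry fun l x ↦ ω x * f x * g (l * ω x))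
      ((volume : Measure ℝ).prod (volume.restrict s)) := by
    change AEStronglyMeasurable (fun p : ℝ × ℝ ↦ ω p.2 * f p.2 * g (p.1 * ω p.2)) _
    exact ((hω_meas.comp measurable_snd).aestronglyMeasurable.mul
      (hf.aestronglyMeasurable.comp_snd (μ := volume))).mul
      (hg_meas.comp (measurable_fst.mul (hω_meas.comp measurable_snd))).aestronglyMeasurable
  refine (integrable_prod_iff' h_meas).2 ⟨?_, ?_⟩
  · exact ae_restrict_of_forall_mem hs fun x hx ↦
      (hg.comp_mul_right' (hω x hx).ne').const_mul (ω x * f x)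
  · refine (hf.norm.mul_const (∫ t, ‖g t‖)).congr (ae_restrict_of_forall_mem hs fun x hx ↦ ?_)
    have h_norm (l : ℝ) : ‖ω x * f x * g (l * ω x)‖ = ω x * ‖f x‖ * ‖g (l * ω x)‖ := by
      rw [norm_mul, norm_mul, Real.norm_of_nonneg (hω x hx).le]
    simp_rw [Function.uncurry_apply_pair, h_norm]
    exact (integral_scaleMixture_slice (f := fun x ↦ ‖f x‖) (g := fun t ↦ ‖g t‖) (hω x hx)).symm

theorem integral_integral_scaleMixture (hs : MeasurableSet s) (hf : IntegrableOn f s)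
    (hg_meas : Measurable g) (hg : Integrable g) (hω_meas : Measurable ω)
    (hω : ∀ x ∈ s, 0 < ω x) :
    ∫ l, ∫ x in s, ω x * f x * g (l * ω x) = (∫ x in s, f x) * ∫ t, g t := by
  rw [integral_integral_swap (integrable_scaleMixture hs hf hg_meas hg hω_meas hω),
    ← integral_mul_const]
  exact setIntegral_congr_fun hs fun x hx ↦ integral_scaleMixture_slice (hω x hx)

end ScaleMixture

theorem BTV_one_one_proper_general
    (f g ω : ℝ → ℝ)
    (hf_int : Integrable f) (hf_one : ∫ x, f x = 1)
    (hf_even : ∀ x, f (-x) = f x)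
    (hg_meas : Measurable g)
    (hg_int : Integrable g) (hg_one : ∫ t, g t = 1)
    (hω_meas : Measurable ω)
    (hω_pos : ∀ x, 0 < x → 0 < ω x) :
    ∫ l : ℝ, 2 * ∫ x in Set.Ioi (0 : ℝ), ω x * f x * g (l * ω x) = 1 := by
  rw [integral_const_mul, integral_integral_scaleMixture measurableSet_Ioi hf_int.integrableOn
    hg_meas hg_int hω_meas hω_pos, integral_Ioi_zero_eq_half_of_even hf_int hf_even, hf_one, hg_one]
  norm_num

/-- the BTV(1,1) prior is a proper probability density:
if ω(x) > 0 for x > 0 then ∫_ℝ π(λ) dλ = 1, where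
π(λ) = 2 ∫_0^∞ ω(x) f(x) g(λ ω(x)) dx. -/
theorem BTV_one_one_proper
    (f g ω : ℝ → ℝ)
    (hf_meas : Measurable f) (hf_nonneg : ∀ x, 0 ≤ f x)
    (hf_int : Integrable f) (hf_one : ∫ x, f x = 1)
    (hf_even : ∀ x, f (-x) = f x)
    (hg_meas : Measurable g) (hg_nonneg : ∀ t, 0 ≤ g t)
    (hg_int : Integrable g) (hg_one : ∫ t, g t = 1)
    (hg_even : ∀ t, g (-t) = g t)
    (hg_bdd : ∃ C : ℝ, ∀ t, g t ≤ C)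
    (hω_meas : Measurable ω)
    (hω_odd : ∀ x, ω (-x) = -ω x)
    (hω_pos : ∀ x, 0 < x → 0 < ω x)
    (hωf_int : IntegrableOn (fun x => ω x * f x) (Set.Ioi 0)) :
    ∫ l : ℝ, 2 * ∫ x in Set.Ioi (0 : ℝ), ω x * f x * g (l * ω x) = 1 :=
  BTV_one_one_proper_general f g ω hf_int hf_one hf_even hg_meas hg_int hg_one hω_meas hω_pos
end

section
/- (Theorem 2.) Let x₁, …, xₙ be real observations with n ≥ 2 and all observations distinct, drawn from the skew-symmetric model s(x; μ, σ, λ) = (2/σ) f((x−μ)/σ) G(λ ω((x−μ)/σ)), where f is a scale mixture of normals: f(x) = ∫_0^∞ √τ φ(√τ x) dH(τ) for some probability measure H on (0,∞), with φ the standard normal density. Let p be a proper prior density on ℝ (p ≥ 0, ∫_ℝ p(λ) dλ = 1). Then the marginal likelihood under the prior π(μ, σ, λ) = p(λ)/σ is finite: ∫_ℝ ∫_0^∞ ∫_ℝ [∏_{j=1}^n s(x_j; μ, σ, λ)] · (p(λ)/σ) dμ dσ dλ < ∞, i.e. the posterior distribution of (μ, σ, λ) is proper. -/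
open MeasureTheory Real

open scoped ENNReal Nat

namespace SkewHelper

lemma one_le_sqrt_two_pi : 1 ≤ Real.sqrt (2 * π) := by
  rw [show (1:ℝ) = Real.sqrt 1 by simp]
  exact Real.sqrt_le_sqrt (by nlinarith [Real.pi_gt_three])

lemma stdNormalPdf_nonneg (y : ℝ) : 0 ≤ stdNormalPdf y := by
  unfold stdNormalPdf; positivity

lemma stdNormalPdf_le_exp (y : ℝ) : stdNormalPdf y ≤ Real.exp (-y ^ 2 / 2) :=
  div_le_self (Real.exp_nonneg _) one_le_sqrt_two_pi

lemma stdNormalPdf_le_one (y : ℝ) : stdNormalPdf y ≤ 1 :=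
  (stdNormalPdf_le_exp y).trans (by
    rw [Real.exp_le_one_iff]
    nlinarith [sq_nonneg y])

lemma measurable_stdNormalPdf : Measurable stdNormalPdf := by
  have : Continuous stdNormalPdf := by
    unfold stdNormalPdf
    exact (Real.continuous_exp.comp (by continuity)).div_const _
  exact this.measurable

lemma lintegral_pi_prod {n : ℕ} (H : Measure ℝ) [SigmaFinite H] (g : Fin n → ℝ → ℝ≥0∞)
    (hg : ∀ j, Measurable (g j)) :
    ∫⁻ τ : Fin n → ℝ, ∏ j, g j (τ j) ∂(Measure.pi fun _ => H) = ∏ j, ∫⁻ t, g j t ∂H := by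
  induction n with
  | zero => simp [Measure.pi_univ]
  | succ n ih =>
      have hmp := measurePreserving_piFinSuccAbove (fun _ : Fin (n + 1) => H) 0
      set F : ℝ × (Fin n → ℝ) → ℝ≥0∞ :=
        fun q => g 0 q.1 * ∏ j : Fin n, g j.succ (q.2 j) with hF
      have hFmeas : Measurable F := by
        apply Measurable.mul ((hg 0).comp measurable_fst)
        exact Finset.measurable_prod _ fun j _ =>
          (hg j.succ).comp ((measurable_pi_apply j).comp measurable_snd)
      have h1 : ∫⁻ τ : Fin (n+1) → ℝ, ∏ j, g j (τ j) ∂(Measure.pi fun _ => H)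
          = ∫⁻ q, F q ∂(H.prod (Measure.pi fun _ : Fin n => H)) := by
        rw [← hmp.lintegral_comp hFmeas]
        refine lintegral_congr fun τ => ?_
        simp only [hF, MeasurableEquiv.piFinSuccAbove_apply, Fin.zero_succAbove]
        rw [Fin.prod_univ_succ]
        rfl
      rw [h1, hF]
      have h2 := lintegral_prod_mul (μ := H) (ν := Measure.pi fun _ : Fin n => H)
        (f := g 0) (g := fun t : Fin n → ℝ => ∏ j : Fin n, g j.succ (t j))
        ((hg 0).aemeasurable)
        ((Finset.measurable_prod _ fun j _ =>
          (hg j.succ).comp (measurable_pi_apply j)).aemeasurable)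
      rw [h2, ih (fun j => g j.succ) (fun j => hg j.succ), Fin.prod_univ_succ]

lemma lintegral_gaussian_ofReal {b : ℝ} (hb : 0 < b) (m : ℝ) :
    ∫⁻ μ : ℝ, ENNReal.ofReal (Real.exp (-b * (μ - m) ^ 2))
      = ENNReal.ofReal (Real.sqrt (π / b)) := by
  have hmeas : Measurable fun y : ℝ => ENNReal.ofReal (Real.exp (-b * y ^ 2)) :=
    ENNReal.measurable_ofReal.comp (Real.measurable_exp.comp (by measurability))
  have h1 : ∫⁻ μ : ℝ, ENNReal.ofReal (Real.exp (-b * (μ - m) ^ 2))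
      = ∫⁻ y : ℝ, ENNReal.ofReal (Real.exp (-b * y ^ 2)) :=
    (measurePreserving_sub_right volume m).lintegral_comp hmeas
  rw [h1, ← ofReal_integral_eq_lintegral_ofReal (integrable_exp_neg_mul_sq hb)
      (Filter.Eventually.of_forall fun y => (Real.exp_pos _).le), integral_gaussian]

lemma exp_neg_le_factorial_div {u : ℝ} (hu : 0 < u) (n : ℕ) :
    Real.exp (-u) ≤ (n ! : ℝ) / u ^ n := by
  have h : u ^ n / (n ! : ℝ) ≤ Real.exp u := by
    calc u ^ n / (n ! : ℝ)
        ≤ ∑ i ∈ Finset.range (n + 1), u ^ i / (i ! : ℝ) :=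
          Finset.single_le_sum (f := fun i => u ^ i / (i ! : ℝ))
            (fun i _ => by positivity) (Finset.self_mem_range_succ n)
      _ ≤ Real.exp u := Real.sum_le_exp_of_nonneg hu.le _
  have hpos : (0:ℝ) < u ^ n / (n ! : ℝ) := by positivity
  rw [Real.exp_neg]
  calc (Real.exp u)⁻¹ ≤ (u ^ n / (n ! : ℝ))⁻¹ := inv_anti₀ hpos h
    _ = (n ! : ℝ) / u ^ n := by rw [inv_div]

lemma head_pointwise {n : ℕ} {r σ : ℝ} (hr : 0 < r) (hσ : 0 < σ) (hσr : σ ≤ r) :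
    (σ ^ n)⁻¹ * Real.exp (-r ^ 2 / σ ^ 2) ≤ (n ! : ℝ) / r ^ n := by
  have hu : (0:ℝ) < r ^ 2 / σ ^ 2 := by positivity
  have h1 : Real.exp (-r ^ 2 / σ ^ 2) ≤ (n ! : ℝ) / (r ^ 2 / σ ^ 2) ^ n := by
    rw [neg_div]
    exact exp_neg_le_factorial_div hu n
  have h2 : (σ ^ n)⁻¹ * ((n ! : ℝ) / (r ^ 2 / σ ^ 2) ^ n) = (n ! : ℝ) * σ ^ n / (r ^ n) ^ 2 := by
    field_simp
    ring_nf
    rw [inv_pow, mul_assoc, mul_inv_cancel₀ (by positivity), mul_one]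
  calc (σ ^ n)⁻¹ * Real.exp (-r ^ 2 / σ ^ 2)
      ≤ (σ ^ n)⁻¹ * ((n ! : ℝ) / (r ^ 2 / σ ^ 2) ^ n) := by
        apply mul_le_mul_of_nonneg_left h1 (by positivity)
    _ = (n ! : ℝ) * σ ^ n / (r ^ n) ^ 2 := h2
    _ ≤ (n ! : ℝ) * r ^ n / (r ^ n) ^ 2 := by
        apply div_le_div_of_nonneg_right ?_ (by positivity)
        · exact mul_le_mul_of_nonneg_left (pow_le_pow_left₀ hσ.le hσr n) (by positivity)
    _ = (n ! : ℝ) / r ^ n := by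
        field_simp

lemma lintegral_sigma_bound {n : ℕ} (hn : 2 ≤ n) {r : ℝ} (hr : 0 < r) :
    ∫⁻ σ in Set.Ioi (0 : ℝ), ENNReal.ofReal ((σ ^ n)⁻¹ * Real.exp (-r ^ 2 / σ ^ 2))
      ≤ ENNReal.ofReal (((n ! : ℝ) + 1) * (r / r ^ n)) := by
  have hrn : (0:ℝ) < r ^ n := by positivity
  rw [← Set.Ioc_union_Ioi_eq_Ioi hr.le,
    lintegral_union measurableSet_Ioi (Set.Ioc_disjoint_Ioi le_rfl)]
  have hhead : ∫⁻ σ in Set.Ioc (0:ℝ) r, ENNReal.ofReal ((σ ^ n)⁻¹ * Real.exp (-r ^ 2 / σ ^ 2))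
      ≤ ENNReal.ofReal ((n ! : ℝ) * (r / r ^ n)) := by
    calc ∫⁻ σ in Set.Ioc (0:ℝ) r, ENNReal.ofReal ((σ ^ n)⁻¹ * Real.exp (-r ^ 2 / σ ^ 2))
        ≤ ∫⁻ _σ in Set.Ioc (0:ℝ) r, ENNReal.ofReal ((n ! : ℝ) / r ^ n) := by
          apply setLIntegral_mono' measurableSet_Ioc
          intro σ hσ
          exact ENNReal.ofReal_le_ofReal (head_pointwise hr hσ.1 hσ.2)
      _ = ENNReal.ofReal ((n ! : ℝ) / r ^ n) * volume (Set.Ioc (0:ℝ) r) :=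
          setLIntegral_const _ _
      _ = ENNReal.ofReal ((n ! : ℝ) * (r / r ^ n)) := by
          rw [Real.volume_Ioc, sub_zero, ← ENNReal.ofReal_mul (by positivity)]
          congr 1
          field_simp
  have htail : ∫⁻ σ in Set.Ioi r, ENNReal.ofReal ((σ ^ n)⁻¹ * Real.exp (-r ^ 2 / σ ^ 2))
      ≤ ENNReal.ofReal (r / r ^ n) := by
    have hlt : -(n:ℝ) < -1 := by
      have : (2:ℝ) ≤ (n:ℝ) := by exact_mod_cast hn
      linarith
    calc ∫⁻ σ in Set.Ioi r, ENNReal.ofReal ((σ ^ n)⁻¹ * Real.exp (-r ^ 2 / σ ^ 2))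
        ≤ ∫⁻ σ in Set.Ioi r, ENNReal.ofReal (σ ^ (-(n:ℝ))) := by
          apply setLIntegral_mono' measurableSet_Ioi
          intro σ hσ
          have hσ0 : 0 < σ := hr.trans hσ
          apply ENNReal.ofReal_le_ofReal
          rw [Real.rpow_neg hσ0.le, Real.rpow_natCast]
          apply mul_le_of_le_one_right (by positivity)
          apply Real.exp_le_one_iff.2
          rw [neg_div]
          exact neg_nonpos.2 (by positivity)
      _ = ENNReal.ofReal (∫ σ in Set.Ioi r, σ ^ (-(n:ℝ))) := by
          rw [ofReal_integral_eq_lintegral_ofReal (integrableOn_Ioi_rpow_of_lt hlt hr)]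
          exact (ae_restrict_iff' measurableSet_Ioi).2 (Filter.Eventually.of_forall
            fun σ hσ => Real.rpow_nonneg (hr.trans hσ).le _)
      _ = ENNReal.ofReal (-r ^ (-(n:ℝ) + 1) / (-(n:ℝ) + 1)) := by
          rw [integral_Ioi_rpow_of_lt hlt hr]
      _ ≤ ENNReal.ofReal (r / r ^ n) := by
          apply ENNReal.ofReal_le_ofReal
          have h1 : r ^ (-(n:ℝ) + 1) = r / r ^ n := by
            rw [show -(n:ℝ) + 1 = 1 - (n:ℝ) by ring, Real.rpow_sub hr, Real.rpow_one,
              Real.rpow_natCast]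
          have h2 : -(n:ℝ) + 1 = -((n:ℝ) - 1) := by ring
          rw [h1, h2, neg_div_neg_eq]
          apply div_le_self (by positivity)
          have : (2:ℝ) ≤ (n:ℝ) := by exact_mod_cast hn
          linarith
  calc _ ≤ ENNReal.ofReal ((n ! : ℝ) * (r / r ^ n)) + ENNReal.ofReal (r / r ^ n) :=
        add_le_add hhead htail
    _ = ENNReal.ofReal (((n ! : ℝ) + 1) * (r / r ^ n)) := by
        rw [← ENNReal.ofReal_add (by positivity) (by positivity)]
        congr 1
        ring

end SkewHelper


set_option maxHeartbeats 2000000 in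
/-- Theorem 2: for an i.i.d. sample of n ≥ 2 distinct
observations from a skew-symmetric location-scale model whose baseline f is a
scale mixture of normals, the posterior under the prior π(μ,σ,λ) = p(λ)/σ
(with p a proper prior on λ) is proper: the marginal likelihood is finite. -/
theorem skew_symmetric_posterior_proper
    (f G ω : ℝ → ℝ) (H : Measure ℝ) [IsProbabilityMeasure H]
    (hH : H (Set.Iic 0) = 0)
    (hf : ∀ x, f x = ∫ τ, Real.sqrt τ * stdNormalPdf (Real.sqrt τ * x) ∂H)
    (hG_meas : Measurable G)
    (hG_range : ∀ t, G t ∈ Set.Icc (0 : ℝ) 1)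
    (hG_symm : ∀ t, G (-t) = 1 - G t)
    (hω_meas : Measurable ω)
    (hω_odd : ∀ x, ω (-x) = -ω x)
    (p : ℝ → ℝ) (hp_meas : Measurable p) (hp_nonneg : ∀ l, 0 ≤ p l)
    (hp_int : Integrable p) (hp_one : ∫ l, p l = 1)
    (n : ℕ) (hn : 2 ≤ n) (x : Fin n → ℝ) (hx : Function.Injective x) :
    ∫⁻ l : ℝ, ∫⁻ σ in Set.Ioi (0 : ℝ), ∫⁻ μ : ℝ,
        ENNReal.ofReal
          ((∏ j : Fin n, (2 / σ) * f ((x j - μ) / σ) * G (l * ω ((x j - μ) / σ)))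
            * (p l / σ)) < ⊤ := by
  classical
  haveI : Nonempty (Fin n) := ⟨⟨0, by omega⟩⟩
  set PM : Measure (Fin n → ℝ) := Measure.pi (fun _ : Fin n => H) with hPMdef
  haveI : IsProbabilityMeasure PM := by rw [hPMdef]; infer_instance
  -- the dominating integrand
  set GB : ℝ → ℝ → (Fin n → ℝ) → ℝ≥0∞ := fun σ μ τ =>
    ENNReal.ofReal ((σ ^ (n + 1))⁻¹) *
      ∏ j, ENNReal.ofReal
        (Real.sqrt (τ j) * stdNormalPdf (Real.sqrt (τ j) * ((x j - μ) / σ))) with hGB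
  have hmeas : Measurable (fun q : ℝ × ℝ × (Fin n → ℝ) => GB q.1 q.2.1 q.2.2) := by
    apply Measurable.mul
    · exact ENNReal.measurable_ofReal.comp ((measurable_fst.pow_const _).inv)
    · apply Finset.measurable_prod
      intro j _
      apply ENNReal.measurable_ofReal.comp
      have hτm : Measurable fun q : ℝ × ℝ × (Fin n → ℝ) => Real.sqrt (q.2.2 j) :=
        Real.continuous_sqrt.measurable.comp
          ((measurable_pi_apply j).comp (measurable_snd.comp measurable_snd))
      have hzm : Measurable fun q : ℝ × ℝ × (Fin n → ℝ) => (x j - q.2.1) / q.1 :=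
        (measurable_const.sub (measurable_fst.comp measurable_snd)).div measurable_fst
      exact hτm.mul (SkewHelper.measurable_stdNormalPdf.comp (hτm.mul hzm))
  set K : ℝ≥0∞ := ∫⁻ σ in Set.Ioi (0 : ℝ), ∫⁻ μ : ℝ, ∫⁻ τ, GB σ μ τ ∂PM with hK
  have hf_nonneg : ∀ z, 0 ≤ f z := fun z => by
    rw [hf z]
    exact integral_nonneg fun t =>
      mul_nonneg (Real.sqrt_nonneg _) (SkewHelper.stdNormalPdf_nonneg _)
  have hfactor : ∀ z : ℝ, ENNReal.ofReal (f z)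
      ≤ ∫⁻ t, ENNReal.ofReal (Real.sqrt t * stdNormalPdf (Real.sqrt t * z)) ∂H := by
    intro z
    by_cases hint : Integrable (fun t => Real.sqrt t * stdNormalPdf (Real.sqrt t * z)) H
    · rw [hf z, ofReal_integral_eq_lintegral_ofReal hint (Filter.Eventually.of_forall
        fun t => mul_nonneg (Real.sqrt_nonneg _) (SkewHelper.stdNormalPdf_nonneg _))]
    · rw [hf z, integral_undef hint]
      simp
  -- Step 1: reduce to finiteness of K
  have step1 : (∫⁻ l : ℝ, ∫⁻ σ in Set.Ioi (0 : ℝ), ∫⁻ μ : ℝ,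
        ENNReal.ofReal
          ((∏ j : Fin n, (2 / σ) * f ((x j - μ) / σ) * G (l * ω ((x j - μ) / σ)))
            * (p l / σ)))
      ≤ ENNReal.ofReal (2 ^ n) * K := by
    have hpoint : ∀ l : ℝ, ∀ σ : ℝ, 0 < σ → ∀ μ : ℝ,
        ENNReal.ofReal
          ((∏ j : Fin n, (2 / σ) * f ((x j - μ) / σ) * G (l * ω ((x j - μ) / σ)))
            * (p l / σ))
        ≤ (ENNReal.ofReal (p l) * ENNReal.ofReal (2 ^ n)) * ∫⁻ τ, GB σ μ τ ∂PM := by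
      intro l σ hσ μ
      have hreal : (∏ j : Fin n, (2 / σ) * f ((x j - μ) / σ) * G (l * ω ((x j - μ) / σ)))
            * (p l / σ)
          ≤ p l * (2 ^ n * ((σ ^ (n + 1))⁻¹ * ∏ j : Fin n, f ((x j - μ) / σ))) := by
        have h1 : (∏ j : Fin n, (2 / σ) * f ((x j - μ) / σ) * G (l * ω ((x j - μ) / σ)))
            ≤ ∏ j : Fin n, (2 / σ) * f ((x j - μ) / σ) := by
          apply Finset.prod_le_prod
          · intro j _
            exact mul_nonneg (mul_nonneg (by positivity) (hf_nonneg _))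
              (hG_range _).1
          · intro j _
            exact mul_le_of_le_one_right
              (mul_nonneg (by positivity) (hf_nonneg _)) (hG_range _).2
        have h2 : (∏ j : Fin n, (2 / σ) * f ((x j - μ) / σ))
            = (2 / σ) ^ n * ∏ j : Fin n, f ((x j - μ) / σ) := by
          rw [Finset.prod_mul_distrib, Finset.prod_const, Finset.card_univ,
            Fintype.card_fin]
        have h3 : ((∏ j : Fin n, (2 / σ) * f ((x j - μ) / σ)) * (p l / σ))
            = p l * (2 ^ n * ((σ ^ (n + 1))⁻¹ * ∏ j : Fin n, f ((x j - μ) / σ))) := by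
          rw [h2, pow_succ, div_pow]
          field_simp
        calc _ ≤ (∏ j : Fin n, (2 / σ) * f ((x j - μ) / σ)) * (p l / σ) :=
              mul_le_mul_of_nonneg_right h1 (div_nonneg (hp_nonneg l) hσ.le)
          _ = _ := h3
      calc ENNReal.ofReal _
          ≤ ENNReal.ofReal (p l * (2 ^ n * ((σ ^ (n + 1))⁻¹
              * ∏ j : Fin n, f ((x j - μ) / σ)))) := ENNReal.ofReal_le_ofReal hreal
        _ = ENNReal.ofReal (p l) * ENNReal.ofReal (2 ^ n)
              * ENNReal.ofReal ((σ ^ (n + 1))⁻¹ * ∏ j : Fin n, f ((x j - μ) / σ)) := by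
            rw [ENNReal.ofReal_mul (hp_nonneg l), ENNReal.ofReal_mul (by positivity),
              mul_assoc]
        _ ≤ (ENNReal.ofReal (p l) * ENNReal.ofReal (2 ^ n)) * ∫⁻ τ, GB σ μ τ ∂PM := by
            apply mul_le_mul_right
            have e1 : ENNReal.ofReal ((σ ^ (n + 1))⁻¹ * ∏ j : Fin n, f ((x j - μ) / σ))
                = ENNReal.ofReal ((σ ^ (n + 1))⁻¹)
                  * ∏ j : Fin n, ENNReal.ofReal (f ((x j - μ) / σ)) := by
              rw [ENNReal.ofReal_mul (by positivity),
                ENNReal.ofReal_prod_of_nonneg (fun j _ => hf_nonneg _)]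
            rw [e1]
            have e2 : (∏ j : Fin n, ENNReal.ofReal (f ((x j - μ) / σ)))
                ≤ ∏ j : Fin n, ∫⁻ t, ENNReal.ofReal
                    (Real.sqrt t * stdNormalPdf (Real.sqrt t * ((x j - μ) / σ))) ∂H :=
              Finset.prod_le_prod' fun j _ => hfactor _
            have e3 : (∏ j : Fin n, ∫⁻ t, ENNReal.ofReal
                  (Real.sqrt t * stdNormalPdf (Real.sqrt t * ((x j - μ) / σ))) ∂H)
                = ∫⁻ τ, ∏ j : Fin n, ENNReal.ofReal
                    (Real.sqrt (τ j) * stdNormalPdf (Real.sqrt (τ j) * ((x j - μ) / σ))) ∂PM := by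
              rw [hPMdef, ← SkewHelper.lintegral_pi_prod H
                (fun j t => ENNReal.ofReal
                  (Real.sqrt t * stdNormalPdf (Real.sqrt t * ((x j - μ) / σ))))
                (fun j => ENNReal.measurable_ofReal.comp
                  (Real.continuous_sqrt.measurable.mul
                    (SkewHelper.measurable_stdNormalPdf.comp
                      (Real.continuous_sqrt.measurable.mul_const _))))]
            calc ENNReal.ofReal ((σ ^ (n + 1))⁻¹)
                  * ∏ j : Fin n, ENNReal.ofReal (f ((x j - μ) / σ))
                ≤ ENNReal.ofReal ((σ ^ (n + 1))⁻¹)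
                  * ∫⁻ τ, ∏ j : Fin n, ENNReal.ofReal
                    (Real.sqrt (τ j) * stdNormalPdf (Real.sqrt (τ j) * ((x j - μ) / σ))) ∂PM := by
                  rw [← e3]; exact mul_le_mul_right e2 _
              _ = ∫⁻ τ, GB σ μ τ ∂PM :=
                  (lintegral_const_mul' _ _ ENNReal.ofReal_ne_top).symm
    calc (∫⁻ l : ℝ, ∫⁻ σ in Set.Ioi (0 : ℝ), ∫⁻ μ : ℝ, ENNReal.ofReal _)
        ≤ ∫⁻ l : ℝ, (ENNReal.ofReal (p l)) * (ENNReal.ofReal (2 ^ n) * K) := by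
          apply lintegral_mono
          intro l
          calc (∫⁻ σ in Set.Ioi (0 : ℝ), ∫⁻ μ : ℝ, ENNReal.ofReal _)
              ≤ ∫⁻ σ in Set.Ioi (0 : ℝ),
                  (ENNReal.ofReal (p l) * ENNReal.ofReal (2 ^ n)) *
                    ∫⁻ μ : ℝ, ∫⁻ τ, GB σ μ τ ∂PM := by
                apply lintegral_mono_ae
                refine (ae_restrict_iff' measurableSet_Ioi).2
                  (Filter.Eventually.of_forall fun σ hσ => ?_)
                calc (∫⁻ μ : ℝ, ENNReal.ofReal _)
                    ≤ ∫⁻ μ : ℝ, (ENNReal.ofReal (p l) * ENNReal.ofReal (2 ^ n)) *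
                        ∫⁻ τ, GB σ μ τ ∂PM := lintegral_mono (hpoint l σ hσ)
                  _ = (ENNReal.ofReal (p l) * ENNReal.ofReal (2 ^ n)) *
                        ∫⁻ μ : ℝ, ∫⁻ τ, GB σ μ τ ∂PM :=
                      lintegral_const_mul' _ _
                        (ENNReal.mul_ne_top ENNReal.ofReal_ne_top ENNReal.ofReal_ne_top)
            _ = ENNReal.ofReal (p l) * (ENNReal.ofReal (2 ^ n) * K) := by
                rw [lintegral_const_mul' _ _
                  (ENNReal.mul_ne_top ENNReal.ofReal_ne_top ENNReal.ofReal_ne_top), hK,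
                  mul_assoc]
      _ = (∫⁻ l : ℝ, ENNReal.ofReal (p l)) * (ENNReal.ofReal (2 ^ n) * K) :=
          lintegral_mul_const'' _ (hp_meas.ennreal_ofReal.aemeasurable)
      _ = ENNReal.ofReal (2 ^ n) * K := by
          rw [← ofReal_integral_eq_lintegral_ofReal hp_int
            (Filter.Eventually.of_forall hp_nonneg), hp_one, ENNReal.ofReal_one, one_mul]
  -- minimal squared gap between observations
  have hoff : (Finset.univ.offDiag : Finset (Fin n × Fin n)).Nonempty := by
    refine ⟨(⟨0, by omega⟩, ⟨1, by omega⟩), Finset.mem_offDiag.2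
      ⟨Finset.mem_univ _, Finset.mem_univ _, ?_⟩⟩
    intro h
    simp only [Fin.mk.injEq] at h
    omega
  set D : ℝ := (Finset.univ.offDiag).inf' hoff
    (fun ij : Fin n × Fin n => (x ij.1 - x ij.2) ^ 2) with hD
  have hD_pos : 0 < D := by
    rw [hD, Finset.lt_inf'_iff]
    rintro ⟨i, j⟩ hij
    have hij' : i ≠ j := (Finset.mem_offDiag.1 hij).2.2
    have hxij : x i - x j ≠ 0 := sub_ne_zero.2 fun h => hij' (hx h)
    positivity
  set E : ℝ := Real.sqrt (D / 8) with hE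
  have hE_pos : 0 < E := Real.sqrt_pos.2 (by linarith)
  set C : ℝ≥0∞ :=
    ENNReal.ofReal (2 * Real.sqrt π * ((n ! : ℝ) + 1) * (1 / E ^ (n - 1))) with hC
  -- key pointwise-in-τ bound
  have key : ∀ τ : Fin n → ℝ, (∀ j, 0 < τ j) →
      (∫⁻ σ in Set.Ioi (0:ℝ), ∫⁻ μ : ℝ, GB σ μ τ) ≤ C := by
    intro τ hτ
    obtain ⟨a, -, ha⟩ := Finset.exists_max_image Finset.univ τ Finset.univ_nonempty
    have herase : (Finset.univ.erase a).Nonempty := by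
      rw [← Finset.card_pos, Finset.card_erase_of_mem (Finset.mem_univ a),
        Finset.card_univ, Fintype.card_fin]
      omega
    obtain ⟨b, hbmem, hb⟩ := Finset.exists_max_image _ τ herase
    have hba : b ≠ a := Finset.ne_of_mem_erase hbmem
    have hab : τ b ≤ τ a := ha b (Finset.mem_univ b)
    have hxab : x a - x b ≠ 0 := sub_ne_zero.2 fun h => hba (hx h).symm
    set eab : ℝ := Real.sqrt ((x a - x b) ^ 2 / 8) with heab
    have heab_pos : 0 < eab := Real.sqrt_pos.2 (by positivity)
    set r : ℝ := Real.sqrt (τ b) * eab with hr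
    have hr_pos : 0 < r := mul_pos (Real.sqrt_pos.2 (hτ b)) heab_pos
    have hr2 : r ^ 2 = τ b * (x a - x b) ^ 2 / 8 := by
      rw [hr, mul_pow, Real.sq_sqrt (hτ b).le, heab, Real.sq_sqrt (by positivity)]
      ring
    set Q : ℝ := ∏ j ∈ Finset.univ.erase a, Real.sqrt (τ j) with hQ
    have hQ_nonneg : 0 ≤ Q := Finset.prod_nonneg fun j _ => Real.sqrt_nonneg _
    have hPQ : (∏ j : Fin n, Real.sqrt (τ j)) = Real.sqrt (τ a) * Q := by
      rw [hQ, ← Finset.mul_prod_erase _ _ (Finset.mem_univ a)]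
    -- μ integral bound for fixed σ > 0
    have hμint : ∀ σ : ℝ, σ ∈ Set.Ioi (0:ℝ) →
        (∫⁻ μ : ℝ, GB σ μ τ) ≤ ENNReal.ofReal (2 * Real.sqrt π * Q) *
          ENNReal.ofReal ((σ ^ n)⁻¹ * Real.exp (-r ^ 2 / σ ^ 2)) := by
      intro σ hσ
      have hσ0 : (0:ℝ) < σ := hσ
      have hσne : σ ≠ 0 := ne_of_gt hσ0
      set bb : ℝ := τ a / (4 * σ ^ 2) with hbb
      have hbb_pos : 0 < bb := by
        rw [hbb]; exact div_pos (hτ a) (by positivity)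
      set A : ℝ := (σ ^ (n + 1))⁻¹ * (∏ j : Fin n, Real.sqrt (τ j))
          * Real.exp (-r ^ 2 / σ ^ 2) with hA
      have hA_nonneg : 0 ≤ A := by
        rw [hA]
        have : (0:ℝ) ≤ ∏ j : Fin n, Real.sqrt (τ j) :=
          Finset.prod_nonneg fun j _ => Real.sqrt_nonneg _
        positivity
      have hstep : ∀ μ : ℝ, GB σ μ τ
          ≤ ENNReal.ofReal (A * Real.exp (-bb * (μ - x a) ^ 2)) := by
        intro μ
        have hGBeq : GB σ μ τ = ENNReal.ofReal ((σ ^ (n + 1))⁻¹ *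
            ∏ j : Fin n, (Real.sqrt (τ j)
              * stdNormalPdf (Real.sqrt (τ j) * ((x j - μ) / σ)))) := by
          rw [hGB]
          rw [ENNReal.ofReal_mul (by positivity),
            ENNReal.ofReal_prod_of_nonneg (fun j _ =>
              mul_nonneg (Real.sqrt_nonneg _) (SkewHelper.stdNormalPdf_nonneg _))]
        rw [hGBeq]
        apply ENNReal.ofReal_le_ofReal
        -- real pointwise inequality
        have hprod : (∏ j : Fin n, (Real.sqrt (τ j)
              * stdNormalPdf (Real.sqrt (τ j) * ((x j - μ) / σ))))
            = (∏ j : Fin n, Real.sqrt (τ j)) *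
              ∏ j : Fin n, stdNormalPdf (Real.sqrt (τ j) * ((x j - μ) / σ)) :=
          Finset.prod_mul_distrib
        have hsplit : (∏ j : Fin n, stdNormalPdf (Real.sqrt (τ j) * ((x j - μ) / σ)))
            = stdNormalPdf (Real.sqrt (τ a) * ((x a - μ) / σ)) *
              (stdNormalPdf (Real.sqrt (τ b) * ((x b - μ) / σ)) *
                ∏ j ∈ (Finset.univ.erase a).erase b,
                  stdNormalPdf (Real.sqrt (τ j) * ((x j - μ) / σ))) := by
          rw [← Finset.mul_prod_erase _ _ (Finset.mem_univ a),
            ← Finset.mul_prod_erase _ _ hbmem]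
        have hrest : (∏ j ∈ (Finset.univ.erase a).erase b,
              stdNormalPdf (Real.sqrt (τ j) * ((x j - μ) / σ))) ≤ 1 :=
          Finset.prod_le_one (fun j _ => SkewHelper.stdNormalPdf_nonneg _)
            (fun j _ => SkewHelper.stdNormalPdf_le_one _)
        have hprod_le : (∏ j : Fin n, stdNormalPdf (Real.sqrt (τ j) * ((x j - μ) / σ)))
            ≤ Real.exp (-(Real.sqrt (τ a) * ((x a - μ) / σ)) ^ 2 / 2) *
              Real.exp (-(Real.sqrt (τ b) * ((x b - μ) / σ)) ^ 2 / 2) := by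
          rw [hsplit]
          have h1 : stdNormalPdf (Real.sqrt (τ b) * ((x b - μ) / σ)) *
                ∏ j ∈ (Finset.univ.erase a).erase b,
                  stdNormalPdf (Real.sqrt (τ j) * ((x j - μ) / σ))
              ≤ stdNormalPdf (Real.sqrt (τ b) * ((x b - μ) / σ)) :=
            mul_le_of_le_one_right (SkewHelper.stdNormalPdf_nonneg _) hrest
          calc _ ≤ stdNormalPdf (Real.sqrt (τ a) * ((x a - μ) / σ)) *
                stdNormalPdf (Real.sqrt (τ b) * ((x b - μ) / σ)) :=
              mul_le_mul_of_nonneg_left h1 (SkewHelper.stdNormalPdf_nonneg _)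
            _ ≤ _ := mul_le_mul (SkewHelper.stdNormalPdf_le_exp _)
                (SkewHelper.stdNormalPdf_le_exp _)
                (SkewHelper.stdNormalPdf_nonneg _) (Real.exp_nonneg _)
        have hexp : Real.exp (-(Real.sqrt (τ a) * ((x a - μ) / σ)) ^ 2 / 2) *
              Real.exp (-(Real.sqrt (τ b) * ((x b - μ) / σ)) ^ 2 / 2)
            ≤ Real.exp (-r ^ 2 / σ ^ 2) * Real.exp (-bb * (μ - x a) ^ 2) := by
          rw [← Real.exp_add, ← Real.exp_add]
          apply Real.exp_le_exp.2
          have hsq : ∀ j : Fin n, (Real.sqrt (τ j) * ((x j - μ) / σ)) ^ 2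
              = τ j * ((x j - μ) ^ 2 * (σ⁻¹) ^ 2) := by
            intro j
            rw [mul_pow, Real.sq_sqrt (hτ j).le, div_eq_mul_inv, mul_pow]
          have hrs : -r ^ 2 / σ ^ 2
              = -(τ b * (x a - x b) ^ 2 / 8 * (σ⁻¹) ^ 2) := by
            rw [hr2, neg_div, div_eq_mul_inv, ← inv_pow]
          have hbs : bb * (μ - x a) ^ 2
              = τ a * ((x a - μ) ^ 2 * (σ⁻¹) ^ 2) / 4 := by
            rw [hbb]
            field_simp
            ring
          rw [hsq a, hsq b, hrs, neg_mul, hbs]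
          have hcomb : 0 ≤ τ a * (x a - μ) ^ 2 / 4 + τ b * (x b - μ) ^ 2 / 2
              - τ b * ((x a - μ) - (x b - μ)) ^ 2 / 8 := by
            nlinarith [sq_nonneg ((x a - μ) + (x b - μ)), sq_nonneg ((x a - μ) - (x b - μ)),
              mul_nonneg (sub_nonneg.2 hab) (sq_nonneg (x a - μ)), (hτ b).le,
              sq_nonneg (x b - μ)]
          nlinarith [mul_nonneg hcomb (sq_nonneg σ⁻¹)]
        -- assemble
        have hfinal : (σ ^ (n + 1))⁻¹ *
            ∏ j : Fin n, (Real.sqrt (τ j)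
              * stdNormalPdf (Real.sqrt (τ j) * ((x j - μ) / σ)))
            ≤ A * Real.exp (-bb * (μ - x a) ^ 2) := by
          rw [hprod, hA]
          have hPn : (0:ℝ) ≤ ∏ j : Fin n, Real.sqrt (τ j) :=
            Finset.prod_nonneg fun j _ => Real.sqrt_nonneg _
          have hc : (0:ℝ) ≤ (σ ^ (n + 1))⁻¹ := by positivity
          calc (σ ^ (n + 1))⁻¹ * ((∏ j : Fin n, Real.sqrt (τ j)) *
                ∏ j : Fin n, stdNormalPdf (Real.sqrt (τ j) * ((x j - μ) / σ)))
              ≤ (σ ^ (n + 1))⁻¹ * ((∏ j : Fin n, Real.sqrt (τ j)) *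
                (Real.exp (-r ^ 2 / σ ^ 2) * Real.exp (-bb * (μ - x a) ^ 2))) := by
                apply mul_le_mul_of_nonneg_left _ hc
                apply mul_le_mul_of_nonneg_left _ hPn
                exact hprod_le.trans hexp
            _ = (σ ^ (n + 1))⁻¹ * (∏ j : Fin n, Real.sqrt (τ j))
                * Real.exp (-r ^ 2 / σ ^ 2) * Real.exp (-bb * (μ - x a) ^ 2) := by ring
        exact hfinal
      calc (∫⁻ μ : ℝ, GB σ μ τ)
          ≤ ∫⁻ μ : ℝ, ENNReal.ofReal (A * Real.exp (-bb * (μ - x a) ^ 2)) :=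
            lintegral_mono hstep
        _ = ENNReal.ofReal A *
              ∫⁻ μ : ℝ, ENNReal.ofReal (Real.exp (-bb * (μ - x a) ^ 2)) := by
            simp_rw [ENNReal.ofReal_mul hA_nonneg]
            exact lintegral_const_mul' _ _ ENNReal.ofReal_ne_top
        _ = ENNReal.ofReal A * ENNReal.ofReal (Real.sqrt (π / bb)) := by
            rw [SkewHelper.lintegral_gaussian_ofReal hbb_pos]
        _ = ENNReal.ofReal (A * Real.sqrt (π / bb)) :=
            (ENNReal.ofReal_mul hA_nonneg).symm
        _ = ENNReal.ofReal (2 * Real.sqrt π * Q) *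
              ENNReal.ofReal ((σ ^ n)⁻¹ * Real.exp (-r ^ 2 / σ ^ 2)) := by
            rw [← ENNReal.ofReal_mul (by positivity)]
            congr 1
            have hsqrtb : Real.sqrt (π / bb) = 2 * σ * (Real.sqrt π / Real.sqrt (τ a)) := by
              have h1 : π / bb = (2 * σ) ^ 2 * (π / τ a) := by
                rw [hbb]
                field_simp
                ring
              rw [h1, Real.sqrt_mul (sq_nonneg _), Real.sqrt_sq (by positivity),
                Real.sqrt_div Real.pi_pos.le]
            rw [hA, hsqrtb, hPQ, pow_succ]
            have hsa : Real.sqrt (τ a) ≠ 0 := ne_of_gt (Real.sqrt_pos.2 (hτ a))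
            field_simp
    -- integrate over σ
    calc (∫⁻ σ in Set.Ioi (0:ℝ), ∫⁻ μ : ℝ, GB σ μ τ)
        ≤ ∫⁻ σ in Set.Ioi (0:ℝ), ENNReal.ofReal (2 * Real.sqrt π * Q) *
            ENNReal.ofReal ((σ ^ n)⁻¹ * Real.exp (-r ^ 2 / σ ^ 2)) :=
          setLIntegral_mono' measurableSet_Ioi hμint
      _ = ENNReal.ofReal (2 * Real.sqrt π * Q) *
            ∫⁻ σ in Set.Ioi (0:ℝ), ENNReal.ofReal ((σ ^ n)⁻¹ * Real.exp (-r ^ 2 / σ ^ 2)) :=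
          lintegral_const_mul' _ _ ENNReal.ofReal_ne_top
      _ ≤ ENNReal.ofReal (2 * Real.sqrt π * Q) *
            ENNReal.ofReal (((n ! : ℝ) + 1) * (r / r ^ n)) :=
          mul_le_mul_right (SkewHelper.lintegral_sigma_bound hn hr_pos) _
      _ = ENNReal.ofReal (2 * Real.sqrt π * Q * (((n ! : ℝ) + 1) * (r / r ^ n))) :=
          (ENNReal.ofReal_mul (by positivity)).symm
      _ ≤ C := by
          rw [hC]
          apply ENNReal.ofReal_le_ofReal
          obtain ⟨m, hm⟩ : ∃ m, n = m + 1 := ⟨n - 1, by omega⟩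
          have hQb : Q ≤ Real.sqrt (τ b) ^ m := by
            rw [hQ]
            calc (∏ j ∈ Finset.univ.erase a, Real.sqrt (τ j))
                ≤ ∏ _j ∈ Finset.univ.erase a, Real.sqrt (τ b) :=
                Finset.prod_le_prod (fun j _ => Real.sqrt_nonneg _)
                  (fun j hj => Real.sqrt_le_sqrt (hb j hj))
              _ = Real.sqrt (τ b) ^ m := by
                rw [Finset.prod_const, Finset.card_erase_of_mem (Finset.mem_univ a),
                  Finset.card_univ, Fintype.card_fin, hm, Nat.add_sub_cancel]
          have hEeab : E ≤ eab := by
            rw [hE, heab]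
            apply Real.sqrt_le_sqrt
            apply div_le_div_of_nonneg_right ?_ (by norm_num)
            · have hmem2 : (a, b) ∈ (Finset.univ.offDiag : Finset (Fin n × Fin n)) :=
                Finset.mem_offDiag.2 ⟨Finset.mem_univ _, Finset.mem_univ _, Ne.symm hba⟩
              exact Finset.inf'_le _ hmem2
          have hsb : Real.sqrt (τ b) ≠ 0 := ne_of_gt (Real.sqrt_pos.2 (hτ b))
          have h1 : Real.sqrt (τ b) ^ m * (r / r ^ (m + 1)) = 1 / eab ^ m := by
            rw [hr]
            field_simp
            ring
          have h2 : Q * (r / r ^ (m + 1)) ≤ 1 / E ^ m := by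
            calc Q * (r / r ^ (m + 1))
                ≤ Real.sqrt (τ b) ^ m * (r / r ^ (m + 1)) := by
                  apply mul_le_mul_of_nonneg_right hQb (by positivity)
              _ = 1 / eab ^ m := h1
              _ ≤ 1 / E ^ m :=
                  one_div_le_one_div_of_le (by positivity)
                    (pow_le_pow_left₀ hE_pos.le hEeab m)
          rw [hm, Nat.add_sub_cancel]
          calc 2 * Real.sqrt π * Q * ((((m + 1)! : ℝ) + 1) * (r / r ^ (m + 1)))
              = (2 * Real.sqrt π * (((m + 1)! : ℝ) + 1)) * (Q * (r / r ^ (m + 1))) := by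
                ring
            _ ≤ (2 * Real.sqrt π * (((m + 1)! : ℝ) + 1)) * (1 / E ^ m) := by
                apply mul_le_mul_of_nonneg_left h2 (by positivity)
            _ = 2 * Real.sqrt π * (((m + 1)! : ℝ) + 1) * (1 / E ^ m) := by ring
  -- a.e. positivity of mixing parameters
  have hae : ∀ᵐ τ ∂PM, ∀ j, 0 < τ j := by
    rw [ae_iff]
    have hsub : {τ : Fin n → ℝ | ¬ ∀ j, 0 < τ j} ⊆ ⋃ j, {τ : Fin n → ℝ | τ j ≤ 0} := by
      intro τ hτ
      rw [Set.mem_setOf_eq, not_forall] at hτ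
      obtain ⟨j, hj⟩ := hτ
      exact Set.mem_iUnion.2 ⟨j, not_lt.1 hj⟩
    apply measure_mono_null hsub
    apply measure_iUnion_null
    intro j
    have hset : {τ : Fin n → ℝ | τ j ≤ 0}
        = Set.pi Set.univ (fun i => if i = j then Set.Iic 0 else Set.univ) := by
      ext τ
      simp only [Set.mem_setOf_eq, Set.mem_pi, Set.mem_univ, true_implies]
      constructor
      · intro h i
        by_cases hij : i = j
        · subst hij; simp [h]
        · simp [hij]
      · intro h
        have := h j
        simpa using this
    rw [hPMdef, hset, Measure.pi_pi]
    apply Finset.prod_eq_zero (Finset.mem_univ j)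
    simp [hH]
  -- swap the order of integration
  have swap1 : ∀ σ : ℝ, (∫⁻ μ : ℝ, ∫⁻ τ, GB σ μ τ ∂PM)
      = ∫⁻ τ, (∫⁻ μ : ℝ, GB σ μ τ) ∂PM := by
    intro σ
    apply lintegral_lintegral_swap
    exact (hmeas.comp (measurable_const.prodMk measurable_id)).aemeasurable
  have swap2 : (∫⁻ σ in Set.Ioi (0:ℝ), ∫⁻ τ, (∫⁻ μ : ℝ, GB σ μ τ) ∂PM)
      = ∫⁻ τ, (∫⁻ σ in Set.Ioi (0:ℝ), ∫⁻ μ : ℝ, GB σ μ τ) ∂PM := by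
    apply lintegral_lintegral_swap
    have h1 : Measurable (fun q : (ℝ × (Fin n → ℝ)) × ℝ => GB q.1.1 q.2 q.1.2) :=
      hmeas.comp ((measurable_fst.comp measurable_fst).prodMk
        (measurable_snd.prodMk (measurable_snd.comp measurable_fst)))
    exact (Measurable.lintegral_prod_right' h1).aemeasurable
  have hKC : K ≤ C := by
    rw [hK]
    calc (∫⁻ σ in Set.Ioi (0:ℝ), ∫⁻ μ : ℝ, ∫⁻ τ, GB σ μ τ ∂PM)
        = ∫⁻ σ in Set.Ioi (0:ℝ), ∫⁻ τ, (∫⁻ μ : ℝ, GB σ μ τ) ∂PM :=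
          lintegral_congr fun σ => swap1 σ
      _ = ∫⁻ τ, (∫⁻ σ in Set.Ioi (0:ℝ), ∫⁻ μ : ℝ, GB σ μ τ) ∂PM := swap2
      _ ≤ ∫⁻ _τ, C ∂PM := lintegral_mono_ae (hae.mono fun τ h => key τ h)
      _ = C := by simp
  calc (∫⁻ l : ℝ, ∫⁻ σ in Set.Ioi (0 : ℝ), ∫⁻ μ : ℝ,
        ENNReal.ofReal
          ((∏ j : Fin n, (2 / σ) * f ((x j - μ) / σ) * G (l * ω ((x j - μ) / σ)))
            * (p l / σ)))
      ≤ ENNReal.ofReal (2 ^ n) * K := step1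
    _ ≤ ENNReal.ofReal (2 ^ n) * C := mul_le_mul_right hKC _
    _ < ⊤ := ENNReal.mul_lt_top ENNReal.ofReal_lt_top ENNReal.ofReal_lt_top
end

section
/- (Two-piece total variation.) Let f be a probability density on ℝ that is symmetric about 0 and unimodal with mode at 0 (f(−x) = f(x) and f nonincreasing on [0,∞)), and let γ ∈ (−1,1). Define the two-piece density s_tp(x;γ) = f(x/(1−γ)) for x < 0 and s_tp(x;γ) = f(x/(1+γ)) for x ≥ 0. Then the total variation distance between s_tp(·;γ) and f equals |γ|/2: (1/2) ∫_ℝ |s_tp(x;γ) − f(x)| dx = |γ|/2. -/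
/-!
On each half-line the two-piece density is a rescaling `f (x / c)` of `f`, and unimodality
makes `f (x / c) - f x` of constant sign there (the sign of `c - 1`). Hence on `(0, ∞)` the
integral of `|f (x / c) - f x|` is `|c - 1|` times the mass `1/2` of a half-line, and by
evenness the same holds on `(-∞, 0)`. The scales `1 - γ` and `1 + γ` each contribute `|γ| / 2`.
-/

open MeasureTheory Real Set

variable {f : ℝ → ℝ}

theorem integrableOn_Ioi_comp_div {c : ℝ} (hf : IntegrableOn f (Ioi 0)) (hc : 0 < c) :
    IntegrableOn (fun x => f (x / c)) (Ioi 0) := by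
  simp_rw [div_eq_inv_mul]
  exact (integrableOn_Ioi_comp_mul_left_iff f 0 (inv_pos.mpr hc)).mpr (by simpa using hf)

theorem setIntegral_Ioi_comp_div (f : ℝ → ℝ) {c : ℝ} (hc : 0 < c) :
    ∫ x in Ioi 0, f (x / c) = c * ∫ x in Ioi 0, f x := by
  simp_rw [div_eq_inv_mul]
  simp [integral_comp_mul_left_Ioi f 0 (inv_pos.mpr hc)]

theorem Function.Even.integral_eq_two_mul_setIntegral_Ioi (hf : f.Even) :
    ∫ x, f x = 2 * ∫ x in Ioi 0, f x := by
  rw [← integral_comp_abs]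
  congr 1 with x
  rcases abs_choice x with h | h <;> rw [h]
  exact (hf x).symm

theorem Function.Even.setIntegral_Iio_eq_Ioi (hf : f.Even) :
    ∫ x in Iio 0, f x = ∫ x in Ioi 0, f x := by
  rw [← integral_Iic_eq_integral_Iio, ← neg_zero, ← integral_comp_neg_Iic, neg_zero]
  simp_rw [hf.eq]

theorem AntitoneOn.setIntegral_Ioi_abs_comp_div_sub (hf : AntitoneOn f (Ici 0))
    (hi : IntegrableOn f (Ioi 0)) {c : ℝ} (hc : 0 < c) :
    ∫ x in Ioi 0, |f (x / c) - f x| = |c - 1| * ∫ x in Ioi 0, f x := by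
  have hic := integrableOn_Ioi_comp_div hi hc
  rcases le_total 1 c with h | h
  · have hpt : ∀ x ∈ Ioi (0 : ℝ), |f (x / c) - f x| = f (x / c) - f x :=
      fun x (hx : 0 < x) => abs_of_nonneg <| sub_nonneg.mpr <|
        hf (div_nonneg (le_of_lt hx) hc.le) (le_of_lt hx) (div_le_self (le_of_lt hx) h)
    rw [setIntegral_congr_fun measurableSet_Ioi hpt, integral_sub hic hi,
      setIntegral_Ioi_comp_div f hc, abs_of_nonneg (sub_nonneg.mpr h)]
    ring
  · have hpt : ∀ x ∈ Ioi (0 : ℝ), |f (x / c) - f x| = f x - f (x / c) :=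
      fun x (hx : 0 < x) => by
      rw [abs_sub_comm]
      exact abs_of_nonneg <| sub_nonneg.mpr <|
        hf (le_of_lt hx) (div_nonneg (le_of_lt hx) hc.le) (le_div_self (le_of_lt hx) hc h)
    rw [setIntegral_congr_fun measurableSet_Ioi hpt, integral_sub hi hic,
      setIntegral_Ioi_comp_div f hc, abs_of_nonpos (sub_nonpos.mpr h)]
    ring

theorem integral_ite_lt_zero_eq_add {g h : ℝ → ℝ} (hg : IntegrableOn g (Iio 0))
    (hh : IntegrableOn h (Ici 0)) :
    ∫ x, (if x < 0 then g x else h x) = (∫ x in Iio 0, g x) + ∫ x in Ici 0, h x := by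
  rw [← intervalIntegral.integral_Iio_add_Ici (f := fun x => if x < 0 then g x else h x)
    (hg.congr_fun (fun x hx => (if_pos hx).symm) measurableSet_Iio)
    (hh.congr_fun (fun x hx => (if_neg (not_lt.mpr hx)).symm) measurableSet_Ici)]
  congr 1
  · exact setIntegral_congr_fun measurableSet_Iio fun x hx => if_pos hx
  · exact setIntegral_congr_fun measurableSet_Ici fun x hx => if_neg (not_lt.mpr hx)

theorem twopiece_tv_distance_general
    (f : ℝ → ℝ) (γ : ℝ) (hγ : γ ∈ Set.Ioo (-1 : ℝ) 1)
    (hf_int : Integrable f) (hf_one : ∫ x, f x = 1)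
    (hf_even : ∀ x, f (-x) = f x)
    (hf_anti : AntitoneOn f (Set.Ici 0)) :
    (1 / 2) * ∫ x, |(if x < 0 then f (x / (1 - γ)) else f (x / (1 + γ))) - f x|
      = |γ| / 2 := by
  obtain ⟨hγl, hγr⟩ := hγ
  have hhalf : ∫ x in Ioi 0, f x = 1 / 2 := by
    linarith [Function.Even.integral_eq_two_mul_setIntegral_Ioi hf_even]
  have hdev_int {c : ℝ} (hc : 0 < c) : Integrable fun x => |f (x / c) - f x| :=
    ((hf_int.comp_div hc.ne').sub hf_int).abs
  have hdev_even (c : ℝ) : Function.Even fun x => |f (x / c) - f x| := fun x => by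
    simp only [neg_div, hf_even]
  have hdev {c : ℝ} (hc : 0 < c) : ∫ x in Ioi 0, |f (x / c) - f x| = |c - 1| / 2 := by
    rw [hf_anti.setIntegral_Ioi_abs_comp_div_sub hf_int.integrableOn hc, hhalf]
    ring
  calc (1 / 2) * ∫ x, |(if x < 0 then f (x / (1 - γ)) else f (x / (1 + γ))) - f x|
      = (1 / 2) * ∫ x,
          (if x < 0 then |f (x / (1 - γ)) - f x| else |f (x / (1 + γ)) - f x|) := by
        congr 2 with x
        split_ifs <;> rfl
    _ = (1 / 2) * ((∫ x in Ioi 0, |f (x / (1 - γ)) - f x|)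
          + ∫ x in Ioi 0, |f (x / (1 + γ)) - f x|) := by
        rw [integral_ite_lt_zero_eq_add (hdev_int (by linarith)).integrableOn
          (hdev_int (by linarith)).integrableOn, (hdev_even _).setIntegral_Iio_eq_Ioi,
          integral_Ici_eq_integral_Ioi]
    _ = |γ| / 2 := by
        rw [hdev (by linarith), hdev (by linarith), sub_sub_cancel_left, abs_neg,
          add_sub_cancel_left]
        ring

/-- two-piece total variation: for f symmetric about 0 and
unimodal with mode at 0, and γ ∈ (−1,1), the total variation distance between
the two-piece density s_tp(·;γ) and f equals |γ|/2. -/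
theorem twopiece_tv_distance
    (f : ℝ → ℝ) (γ : ℝ) (hγ : γ ∈ Set.Ioo (-1 : ℝ) 1)
    (hf_meas : Measurable f) (hf_nonneg : ∀ x, 0 ≤ f x)
    (hf_int : Integrable f) (hf_one : ∫ x, f x = 1)
    (hf_even : ∀ x, f (-x) = f x)
    (hf_anti : AntitoneOn f (Set.Ici 0)) :
    (1 / 2) * ∫ x, |(if x < 0 then f (x / (1 - γ)) else f (x / (1 + γ))) - f x|
      = |γ| / 2 :=
  twopiece_tv_distance_general f γ hγ hf_int hf_one hf_even hf_anti
end
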